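/- arXiv:1510.06879 — 3 statements merged into one kernel-verified Lean document; each statement's English description precedes it below -/
import Mathlib

section
/- For all closed session types T and U: U ≽ T if and only if T ⊨ F(U, &), where ≽ denotes the subtyping relation ≤_&. -/
namespace SessionCF

/-- Polarity of an action: `send` is `!`, `recv` is `?`.  Also used for the
choice constructors: `send` is the internal choice `⊕`, `recv` the external
choice `&`. -/
inductive Pol : Type
  | send
  | recv
  deriving DecidableEq, Repr

/-- The dual polarity / constructor. -/
def Pol.dual : Pol → Pol
  | .send => .recv
  | .recv => .send

/-- Actions `!a` and `?a` over the alphabet `A`. -/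
abbrev Act (A : Type) := Pol × A

/-- Session types (de Bruijn representation of recursion variables).
An internal choice `⊕_{i∈I} !a_i.T_i` is `choice .send I br`; an external
choice `&_{i∈I} ?a_i.T_i` is `choice .recv I br`, where `br a` is the
continuation after message `a` (only relevant for `a ∈ I`). -/
inductive SType (A : Type) : Type
  | end_ : SType A
  | choice : Pol → Finset A → (A → SType A) → SType A
  | mu : SType A → SType A
  | var : ℕ → SType A

namespace SType

variable {A : Type}

/-- Lifting of a renaming under a binder. -/
def liftR (f : ℕ → ℕ) : ℕ → ℕ
  | 0 => 0
  | n + 1 => f n + 1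

/-- Renaming of free type variables. -/
def rename : SType A → (ℕ → ℕ) → SType A
  | .end_, _ => .end_
  | .choice p d br, f => .choice p d (fun a => (br a).rename f)
  | .mu T, f => .mu (T.rename (liftR f))
  | .var n, f => .var (f n)

/-- Lifting of a (parallel, capture-avoiding) substitution under a binder. -/
def liftS (σ : ℕ → SType A) : ℕ → SType A
  | 0 => .var 0
  | n + 1 => (σ n).rename Nat.succ

/-- Parallel capture-avoiding substitution. -/
def subst : SType A → (ℕ → SType A) → SType A
  | .end_, _ => .end_
  | .choice p d br, σ => .choice p d (fun a => (br a).subst σ)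
  | .mu T, σ => .mu (T.subst (liftS σ))
  | .var n, σ => σ n

/-- Capture-avoiding substitution `T[U/x]` of `U` for the free variable `x`. -/
def substVar (T : SType A) (x : ℕ) (U : SType A) : SType A :=
  T.subst (fun n => if n = x then U else .var n)

/-- `cons` of a type onto a substitution. -/
def consS (U : SType A) (σ : ℕ → SType A) : ℕ → SType A
  | 0 => U
  | n + 1 => σ n

/-- The unfolding `T[rec x.T / x]` of the body of `rec x.T`. -/
def unfold (T : SType A) : SType A :=
  T.subst (consS (.mu T) .var)

/-- All free variables are `< k`. -/
def closedUnder : SType A → ℕ → Prop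
  | .end_, _ => True
  | .choice _ d br, k => ∀ a ∈ d, (br a).closedUnder k
  | .mu T, k => T.closedUnder (k + 1)
  | .var n, k => n < k

/-- A closed session type (no free variables). -/
def closed (T : SType A) : Prop := T.closedUnder 0

/-- Variable `x` only occurs guarded (under a choice prefix). -/
def guardedVar : SType A → ℕ → Prop
  | .end_, _ => True
  | .choice _ _ _, _ => True
  | .mu T, x => T.guardedVar (x + 1)
  | .var m, x => m ≠ x

/-- Well-formed session types: contractive (every recursion variable is
guarded) and every choice has a nonempty, finite index set. -/
def wf : SType A → Prop
  | .end_ => True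
  | .choice _ d br => d.Nonempty ∧ ∀ a ∈ d, (br a).wf
  | .mu T => T.wf ∧ T.guardedVar 0
  | .var _ => True

/-- The dual session type: swaps `⊕` with `&` and `!` with `?`. -/
def dual : SType A → SType A
  | .end_ => .end_
  | .choice p d br => .choice p.dual d (fun a => (br a).dual)
  | .mu T => .mu T.dual
  | .var n => .var n

end SType

/-- The labelled transition system on session types. -/
inductive Step {A : Type} : SType A → Act A → SType A → Prop
  | choice {p : Pol} {d : Finset A} {br : A → SType A} {a : A} (h : a ∈ d) :
      Step (.choice p d br) (p, a) (br a)
  | unf {T : SType A} {α : Act A} {T' : SType A} :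
      Step T.unfold α T' → Step (.mu T) α T'

/-- Modal μ-calculus formulae (greatest-fixpoint fragment), de Bruijn. -/
inductive Formula (A : Type) : Type
  | tt : Formula A
  | ff : Formula A
  | and : Formula A → Formula A → Formula A
  | or : Formula A → Formula A → Formula A
  | box : Act A → Formula A → Formula A
  | dia : Act A → Formula A → Formula A
  | nu : Formula A → Formula A
  | var : ℕ → Formula A

namespace Formula

variable {A : Type}

/-- Renaming of free formula variables. -/
def rename : Formula A → (ℕ → ℕ) → Formula A
  | .tt, _ => .tt
  | .ff, _ => .ff
  | .and φ ψ, f => .and (φ.rename f) (ψ.rename f)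
  | .or φ ψ, f => .or (φ.rename f) (ψ.rename f)
  | .box α φ, f => .box α (φ.rename f)
  | .dia α φ, f => .dia α (φ.rename f)
  | .nu φ, f => .nu (φ.rename (SType.liftR f))
  | .var n, f => .var (f n)

/-- Lifting of a substitution under a `ν` binder. -/
def liftF (τ : ℕ → Formula A) : ℕ → Formula A
  | 0 => .var 0
  | n + 1 => (τ n).rename Nat.succ

/-- Parallel capture-avoiding substitution on formulae. -/
def subst : Formula A → (ℕ → Formula A) → Formula A
  | .tt, _ => .tt
  | .ff, _ => .ff
  | .and φ ψ, τ => .and (φ.subst τ) (ψ.subst τ)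
  | .or φ ψ, τ => .or (φ.subst τ) (ψ.subst τ)
  | .box α φ, τ => .box α (φ.subst τ)
  | .dia α φ, τ => .dia α (φ.subst τ)
  | .nu φ, τ => .nu (φ.subst (liftF τ))
  | .var n, τ => τ n

/-- Capture-avoiding substitution `φ[ψ/x]` for the free variable `x`. -/
def substVar (φ : Formula A) (x : ℕ) (ψ : Formula A) : Formula A :=
  φ.subst (fun n => if n = x then ψ else .var n)

/-- `cons` of a formula onto a substitution. -/
def consF (ψ : Formula A) (τ : ℕ → Formula A) : ℕ → Formula A
  | 0 => ψ
  | n + 1 => τ n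

/-- Instantiation `φ[ψ/x]` of the variable bound by the enclosing binder
(de Bruijn index `0`). -/
def inst (φ ψ : Formula A) : Formula A :=
  φ.subst (consF ψ .var)

/-- The `n`-th approximation `(νx.φ)ⁿ` of the fixpoint `νx.φ`, where `φ` is
the body:  `(νx.φ)⁰ = true` and `(νx.φ)ⁿ⁺¹ = φ[(νx.φ)ⁿ/x]`. -/
def nuApprox (φ : Formula A) : ℕ → Formula A
  | 0 => .tt
  | n + 1 => φ.inst (φ.nuApprox n)

/-- All free formula variables are `< k`. -/
def closedUnder : Formula A → ℕ → Prop
  | .tt, _ => True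
  | .ff, _ => True
  | .and φ ψ, k => φ.closedUnder k ∧ ψ.closedUnder k
  | .or φ ψ, k => φ.closedUnder k ∧ ψ.closedUnder k
  | .box _ φ, k => φ.closedUnder k
  | .dia _ φ, k => φ.closedUnder k
  | .nu φ, k => φ.closedUnder (k + 1)
  | .var n, k => n < k

/-- A closed formula. -/
def closed (φ : Formula A) : Prop := φ.closedUnder 0

/-- Variable `x` only occurs guarded (under a modality). -/
def guardedVar : Formula A → ℕ → Prop
  | .tt, _ => True
  | .ff, _ => True
  | .and φ ψ, x => φ.guardedVar x ∧ ψ.guardedVar x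
  | .or φ ψ, x => φ.guardedVar x ∧ ψ.guardedVar x
  | .box _ _, _ => True
  | .dia _ _, _ => True
  | .nu φ, x => φ.guardedVar (x + 1)
  | .var m, x => m ≠ x

/-- Contractive (well-formed) formulae. -/
def wf : Formula A → Prop
  | .tt => True
  | .ff => True
  | .and φ ψ => φ.wf ∧ ψ.wf
  | .or φ ψ => φ.wf ∧ ψ.wf
  | .box _ φ => φ.wf
  | .dia _ φ => φ.wf
  | .nu φ => φ.wf ∧ φ.guardedVar 0
  | .var _ => True

/-- The dual formula: swaps `!` and `?` in all modalities. -/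
def dual : Formula A → Formula A
  | .tt => .tt
  | .ff => .ff
  | .and φ ψ => .and φ.dual ψ.dual
  | .or φ ψ => .or φ.dual ψ.dual
  | .box (p, a) φ => .box (p.dual, a) φ.dual
  | .dia (p, a) φ => .dia (p.dual, a) φ.dual
  | .nu φ => .nu φ.dual
  | .var n => .var n

end Formula

/-- The satisfaction relation `T ⊨ φ` between session types and formulae,
defined inductively; `T ⊨ νx.φ` iff `T ⊨ (νx.φ)ⁿ` for all `n`. -/
inductive Sat {A : Type} : SType A → Formula A → Prop
  | tt {T : SType A} : Sat T .tt
  | and {T : SType A} {φ ψ : Formula A} : Sat T φ → Sat T ψ → Sat T (.and φ ψ)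
  | orl {T : SType A} {φ ψ : Formula A} : Sat T φ → Sat T (.or φ ψ)
  | orr {T : SType A} {φ ψ : Formula A} : Sat T ψ → Sat T (.or φ ψ)
  | box {T : SType A} {α : Act A} {φ : Formula A} :
      (∀ T', Step T α T' → Sat T' φ) → Sat T (.box α φ)
  | dia {T T' : SType A} {α : Act A} {φ : Formula A} :
      Step T α T' → Sat T' φ → Sat T (.dia α φ)
  | nu {T : SType A} {φ : Formula A} :
      (∀ n, Sat T (φ.nuApprox n)) → Sat T (.nu φ)

/-- One step of the subtyping rules (for parameter `s ∈ {⊕, &}`), including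
the equi-recursive identifications of `rec x.T` with its unfolding. -/
def SubStep {A : Type} (s : Pol) (R : SType A → SType A → Prop)
    (T U : SType A) : Prop :=
  (T = .end_ ∧ U = .end_)
  ∨ (∃ (dT : Finset A) (brT : A → SType A) (dU : Finset A) (brU : A → SType A),
      T = .choice s dT brT ∧ U = .choice s dU brU ∧ dT ⊆ dU ∧
        ∀ a ∈ dT, R (brT a) (brU a))
  ∨ (∃ (dT : Finset A) (brT : A → SType A) (dU : Finset A) (brU : A → SType A),
      T = .choice s.dual dT brT ∧ U = .choice s.dual dU brU ∧ dU ⊆ dT ∧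
        ∀ a ∈ dU, R (brT a) (brU a))
  ∨ (∃ T₀, T = .mu T₀ ∧ R T₀.unfold U)
  ∨ (∃ U₀, U = .mu U₀ ∧ R T U₀.unfold)

/-- The subtyping relation `≤_s`: the largest relation closed under the
(coinductively interpreted, equi-recursive) subtyping rules. -/
def Subtype {A : Type} (s : Pol) (T U : SType A) : Prop :=
  ∃ R : SType A → SType A → Prop,
    (∀ T U, R T U → SubStep s R T U) ∧ R T U

section CharFormula

variable {A : Type} [Fintype A] [LinearOrder A]

/-- Big conjunction of a list of formulae. -/
def bigAnd : List (Formula A) → Formula A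
  | [] => .tt
  | φ :: rest => .and φ (bigAnd rest)

/-- Big disjunction of a list of formulae. -/
def bigOr : List (Formula A) → Formula A
  | [] => .ff
  | φ :: rest => .or φ (bigOr rest)

/-- The (canonically ordered) list of all actions `𝒜 = {!a, ?a : a ∈ 𝔸}`. -/
def allActs (A : Type) [Fintype A] [LinearOrder A] : List (Act A) :=
  ((Finset.univ : Finset A).sort (· ≤ ·)).map (fun a => (Pol.send, a)) ++
    ((Finset.univ : Finset A).sort (· ≤ ·)).map (fun a => (Pol.recv, a))

/-- The characteristic formula `F(T, s)` of a session type `T` on the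
constructor `s ∈ {⊕, &}`. -/
def charF : SType A → Pol → Formula A
  | .end_, _ => bigAnd ((allActs A).map (fun α => .box α .ff))
  | .var n, _ => .var n
  | .mu T, s => .nu (charF T s)
  | .choice p d br, s =>
      if p = s then
        bigAnd ((d.sort (· ≤ ·)).map (fun a => .dia (p, a) (charF (br a) s)))
      else
        .and
          (bigAnd ((d.sort (· ≤ ·)).map (fun a => .box (p, a) (charF (br a) s))))
          (.and
            (bigOr ((d.sort (· ≤ ·)).map (fun a => Formula.dia (p, a) .tt)))
            (bigAnd (((allActs A).filter
                (fun α => ¬ (α.1 = p ∧ α.2 ∈ d))).map (fun α => .box α .ff))))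

end CharFormula

/-- Synchronous semantics of a system of two session types. -/
inductive SysStep {A : Type} : SType A × SType A → SType A × SType A → Prop
  | comm {T T' U U' : SType A} {p : Pol} {a : A} :
      Step T (p, a) T' → Step U (p.dual, a) U' → SysStep (T, U) (T', U')

/-- `T` is a choice with constructor `p`. -/
def isChoice {A : Type} (p : Pol) (T : SType A) : Prop :=
  ∃ (d : Finset A) (br : A → SType A), T = SType.choice p d br

/-- Error systems. -/
def Error {A : Type} (T U : SType A) : Prop :=
  (∃ p, isChoice p T ∧ isChoice p U)
  ∨ (∃ (dT : Finset A) (brT : A → SType A) (dU : Finset A) (brU : A → SType A),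
      T = .choice .send dT brT ∧ U = .choice .recv dU brU ∧ ∃ a ∈ dT, a ∉ dU)
  ∨ (∃ (dT : Finset A) (brT : A → SType A) (dU : Finset A) (brU : A → SType A),
      U = .choice .send dU brU ∧ T = .choice .recv dT brT ∧ ∃ a ∈ dU, a ∉ dT)
  ∨ (T = .end_ ∧ ∃ p, isChoice p U)
  ∨ (U = .end_ ∧ ∃ p, isChoice p T)

/-- A system is safe if no reachable system is an error. -/
def Safe {A : Type} (T U : SType A) : Prop :=
  ∀ S' : SType A × SType A,
    Relation.ReflTransGen SysStep (T, U) S' → ¬ Error S'.1 S'.2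

/-- A substitution is closed when all its components are closed types. -/
def closedSubst {A : Type} (σ : ℕ → SType A) : Prop :=
  ∀ n, (σ n).closed

/-- Extended subtyping: all closed instantiations of the free variables are
related by `≤_s`. -/
def ExtSub {A : Type} (s : Pol) (T U : SType A) : Prop :=
  ∀ σ : ℕ → SType A, closedSubst σ → Subtype s (T.subst σ) (U.subst σ)

/-- The `k`-limited subtyping derivations on closed types (equi-recursive:
recursion may be unfolded freely at the same level; premises are at level
`k - 1`; everything holds at level `0`). -/
inductive SubK {A : Type} (s : Pol) : ℕ → SType A → SType A → Prop
  | zero {T U : SType A} : SubK s 0 T U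
  | end_ {k : ℕ} : SubK s (k + 1) .end_ .end_
  | ch {k : ℕ} {dT : Finset A} {brT : A → SType A} {dU : Finset A}
      {brU : A → SType A} :
      dT ⊆ dU → (∀ a ∈ dT, SubK s k (brT a) (brU a)) →
      SubK s (k + 1) (.choice s dT brT) (.choice s dU brU)
  | coch {k : ℕ} {dT : Finset A} {brT : A → SType A} {dU : Finset A}
      {brU : A → SType A} :
      dU ⊆ dT → (∀ a ∈ dU, SubK s k (brT a) (brU a)) →
      SubK s (k + 1) (.choice s.dual dT brT) (.choice s.dual dU brU)
  | recL {k : ℕ} {T U : SType A} :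
      SubK s (k + 1) T.unfold U → SubK s (k + 1) (.mu T) U
  | recR {k : ℕ} {T U : SType A} :
      SubK s (k + 1) T U.unfold → SubK s (k + 1) T (.mu U)

/-- The extended `k`-limited subtyping `≤_{s,e,k}`. -/
def ExtSubK {A : Type} (s : Pol) (k : ℕ) (T U : SType A) : Prop :=
  ∀ σ : ℕ → SType A, closedSubst σ → SubK s k (T.subst σ) (U.subst σ)

/-- Extended satisfaction `T ⊨_e φ`: every closed instantiation of the type
by types `V_i` and of the formula by closed formulae `ψ_i` with `V_i ⊨ ψ_i`
(at the same variable) satisfies the instantiated formula. -/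
def SatE {A : Type} (T : SType A) (φ : Formula A) : Prop :=
  ∀ (σ : ℕ → SType A) (τ : ℕ → Formula A),
    closedSubst σ → (∀ n, (τ n).closed) → (∀ n, Sat (σ n) (τ n)) →
    Sat (T.subst σ) (φ.subst τ)

/-- The `k`-limited extended satisfaction relation `⊨_{e,k}`. -/
inductive SatK {A : Type} : ℕ → SType A → Formula A → Prop
  | zero {T : SType A} {φ : Formula A} : SatK 0 T φ
  | tt {k : ℕ} {T : SType A} : SatK (k + 1) T .tt
  | and {k : ℕ} {T : SType A} {φ ψ : Formula A} :
      SatK (k + 1) T φ → SatK (k + 1) T ψ → SatK (k + 1) T (.and φ ψ)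
  | orl {k : ℕ} {T : SType A} {φ ψ : Formula A} :
      SatK (k + 1) T φ → SatK (k + 1) T (.or φ ψ)
  | orr {k : ℕ} {T : SType A} {φ ψ : Formula A} :
      SatK (k + 1) T ψ → SatK (k + 1) T (.or φ ψ)
  | box {k : ℕ} {T : SType A} {α : Act A} {φ : Formula A} :
      (∀ σ : ℕ → SType A, closedSubst σ →
        ∀ T', Step (T.subst σ) α T' → SatK k T' φ) →
      SatK (k + 1) T (.box α φ)
  | dia {k : ℕ} {T : SType A} {α : Act A} {φ : Formula A}
      (W : ∀ σ : ℕ → SType A, closedSubst σ → SType A) :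
      (∀ (σ : ℕ → SType A) (h : closedSubst σ), Step (T.subst σ) α (W σ h)) →
      (∀ (σ : ℕ → SType A) (h : closedSubst σ), SatK k (W σ h) φ) →
      SatK (k + 1) T (.dia α φ)
  | nu {k : ℕ} {T : SType A} {φ : Formula A} :
      (∀ n, SatK (k + 1) T (φ.nuApprox n)) → SatK (k + 1) T (.nu φ)

/-- Type constructors `ℭ`: `end`, `⊕A` and `&A`. -/
inductive Ctor (A : Type) : Type
  | end_ : Ctor A
  | choice : Pol → Finset A → Ctor A

/-- The labelling of the term automaton `𝒜(T)`: the constructor of (the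
unfolding of) a session type. -/
inductive HasCtor {A : Type} : SType A → Ctor A → Prop
  | end_ : HasCtor .end_ .end_
  | choice {p : Pol} {d : Finset A} {br : A → SType A} :
      HasCtor (.choice p d br) (.choice p d)
  | unf {T : SType A} {c : Ctor A} : HasCtor T.unfold c → HasCtor (.mu T) c

/-- The order `⊑` on type constructors. -/
def CtorLe {A : Type} : Ctor A → Ctor A → Prop
  | .end_, .end_ => True
  | .choice .send d₁, .choice .send d₂ => d₁ ⊆ d₂
  | .choice .recv d₁, .choice .recv d₂ => d₂ ⊆ d₁
  | _, _ => False

/-- Transitions of the product automaton `𝒜(T) × 𝒜(U)`: a common action. -/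
def ProdStep {A : Type} (S S' : SType A × SType A) : Prop :=
  ∃ α : Act A, Step S.1 α S'.1 ∧ Step S.2 α S'.2

end SessionCF

namespace SessionCF
namespace SType

variable {A : Type}

theorem liftR_comp (f g : ℕ → ℕ) : (fun n => liftR g (liftR f n)) = liftR (fun n => g (f n)) := by
  funext n; cases n <;> simp [liftR]

theorem rename_rename (T : SType A) : ∀ f g, (T.rename f).rename g = T.rename (fun n => g (f n)) := by
  induction T with
  | end_ => intros; rfl
  | choice p d br ih => intro f g; simp [rename, ih]
  | mu T ih => intro f g; simp [rename, ih, liftR_comp]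
  | var n => intros; rfl

theorem liftS_liftR (σ : ℕ → SType A) (f : ℕ → ℕ) :
    (fun n => liftS σ (liftR f n)) = liftS (fun n => σ (f n)) := by
  funext n; cases n <;> simp [liftS, liftR]

theorem rename_subst (T : SType A) : ∀ f σ, (T.rename f).subst σ = T.subst (fun n => σ (f n)) := by
  induction T with
  | end_ => intros; rfl
  | choice p d br ih => intro f σ; simp [rename, subst, ih]
  | mu T ih => intro f σ; simp [rename, subst, ih, liftS_liftR]
  | var n => intros; rfl

theorem liftS_rename (σ : ℕ → SType A) (f : ℕ → ℕ) :
    (fun n => (liftS σ n).rename (liftR f)) = liftS (fun n => (σ n).rename f) := by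
  funext n; cases n with
  | zero => simp [liftS, rename, liftR]
  | succ n => simp [liftS, rename_rename]; rfl

theorem subst_rename (T : SType A) : ∀ σ f, (T.subst σ).rename f = T.subst (fun n => (σ n).rename f) := by
  induction T with
  | end_ => intros; rfl
  | choice p d br ih => intro σ f; simp [rename, subst, ih]
  | mu T ih => intro σ f; simp [rename, subst, ih, liftS_rename]
  | var n => intros; rfl

theorem liftS_liftS (σ σ' : ℕ → SType A) :
    (fun n => (liftS σ n).subst (liftS σ')) = liftS (fun n => (σ n).subst σ') := by
  funext n; cases n with
  | zero => simp [liftS, subst]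
  | succ n => simp [liftS, rename_subst, subst_rename]

theorem subst_subst (T : SType A) : ∀ σ σ', (T.subst σ).subst σ' = T.subst (fun n => (σ n).subst σ') := by
  induction T with
  | end_ => intros; rfl
  | choice p d br ih => intro σ σ'; simp [subst, ih]
  | mu T ih => intro σ σ'; simp [subst, ih, liftS_liftS]
  | var n => intros; rfl

theorem subst_var (T : SType A) : T.subst .var = T := by
  induction T with
  | end_ => rfl
  | choice p d br ih => simp [subst, ih]
  | mu T ih =>
      simp only [subst]
      have : (liftS (.var : ℕ → SType A)) = .var := by
        funext n; cases n <;> simp [liftS, rename]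
      rw [this, ih]
  | var n => rfl

end SType
end SessionCF
namespace SessionCF
namespace SType

variable {A : Type}

theorem closedUnder_mono {T : SType A} : ∀ {k k'}, T.closedUnder k → k ≤ k' → T.closedUnder k' := by
  induction T with
  | end_ => intros; trivial
  | choice p d br ih => intro k k' hc hk a ha; exact ih a (hc a ha) hk
  | mu T ih => intro k k' hc hk; exact ih hc (by omega)
  | var n => intro k k' hc hk; exact lt_of_lt_of_le hc hk

theorem rename_closedUnder {T : SType A} : ∀ {k j} {f : ℕ → ℕ}, T.closedUnder k →
    (∀ x, x < k → f x < j) → (T.rename f).closedUnder j := by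
  induction T with
  | end_ => intros; trivial
  | choice p d br ih => intro k j f hc hf a ha; exact ih a (hc a ha) hf
  | mu T ih =>
      intro k j f hc hf
      exact ih hc (by intro x hx; cases x with
        | zero => simp [liftR]
        | succ x => simpa [liftR] using hf x (by omega))
  | var n => intro k j f hc hf; exact hf n hc

theorem subst_closedUnder {T : SType A} : ∀ {k j} {σ : ℕ → SType A}, T.closedUnder k →
    (∀ n, n < k → (σ n).closedUnder j) → (T.subst σ).closedUnder j := by
  induction T with
  | end_ => intros; trivial
  | choice p d br ih => intro k j σ hc hσ a ha; exact ih a (hc a ha) hσ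
  | mu T ih =>
      intro k j σ hc hσ
      refine ih hc ?_
      intro n hn
      cases n with
      | zero => simp [liftS, closedUnder]
      | succ n => exact rename_closedUnder (hσ n (by omega)) (by omega)
  | var n => intro k j σ hc hσ; exact hσ n hc

theorem guardedVar_of_closedUnder {T : SType A} : ∀ {k x}, T.closedUnder k → k ≤ x →
    T.guardedVar x := by
  induction T with
  | end_ => intros; trivial
  | choice p d br ih => intros; trivial
  | mu T ih => intro k x hc hk; exact ih hc (by omega)
  | var n =>
      intro k x hc hk
      have h : n < k := hc
      show n ≠ x
      omega

theorem guardedVar_rename {T : SType A} : ∀ {f : ℕ → ℕ} {x}, T.guardedVar x →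
    (∀ m, m ≠ x → f m ≠ f x) → (T.rename f).guardedVar (f x) := by
  induction T with
  | end_ => intros; trivial
  | choice p d br ih => intros; trivial
  | mu T ih =>
      intro f x hg hf
      have : liftR f (x + 1) = f x + 1 := rfl
      show (T.rename (liftR f)).guardedVar (f x + 1)
      rw [← this]
      refine ih hg ?_
      intro m hm
      cases m with
      | zero =>
          show (0:ℕ) ≠ liftR f (x+1)
          rw [this]; omega
      | succ m =>
          show f m + 1 ≠ liftR f (x+1)
          rw [this]
          have := hf m (by omega)
          omega
  | var n => intro f x hg hf; exact hf n hg

theorem liftR_inj {f : ℕ → ℕ} (hf : Function.Injective f) : Function.Injective (liftR f) := by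
  intro a b h
  match a, b with
  | 0, 0 => rfl
  | 0, b+1 => simp only [liftR] at h; omega
  | a+1, 0 => simp only [liftR] at h; omega
  | a+1, b+1 =>
      simp only [liftR] at h
      have h1 : f a = f b := by omega
      have h2 := hf h1
      omega

theorem wf_rename {T : SType A} : ∀ {f : ℕ → ℕ}, T.wf → Function.Injective f →
    (T.rename f).wf := by
  induction T with
  | end_ => intros; trivial
  | choice p d br ih =>
      intro f hw hf
      exact ⟨hw.1, fun a ha => ih a (hw.2 a ha) hf⟩
  | mu T ih =>
      intro f hw hf
      refine ⟨ih hw.1 (liftR_inj hf), ?_⟩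
      have harg : ∀ m, m ≠ 0 → liftR f m ≠ liftR f 0 := by
        intro m hm
        cases m with
        | zero => omega
        | succ m => show f m + 1 ≠ 0; omega
      exact guardedVar_rename (f := liftR f) (x := 0) hw.2 harg
  | var n => intros; trivial

theorem guardedVar_subst {T : SType A} : ∀ {σ : ℕ → SType A} {x}, T.guardedVar x →
    σ x = .var x → (∀ n, n ≠ x → (σ n).guardedVar x) → (T.subst σ).guardedVar x := by
  induction T with
  | end_ => intros; trivial
  | choice p d br ih => intros; trivial
  | mu T ih =>
      intro σ x hg hx hσ
      show (T.subst (liftS σ)).guardedVar (x + 1)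
      refine ih hg (by simp [liftS, hx, rename]) ?_
      intro n hn
      cases n with
      | zero => show (0:ℕ) ≠ x + 1; omega
      | succ n =>
          show (((σ n).rename Nat.succ)).guardedVar (x + 1)
          have : Nat.succ x = x + 1 := rfl
          rw [← this]
          exact guardedVar_rename (hσ n (by omega)) (by intro m hm; omega)
  | var n =>
      intro σ x hg hx hσ
      exact hσ n hg

/-- Substitutions suitable for preserving well-formedness. -/
def Nice (σ : ℕ → SType A) : Prop :=
  ∀ n, (σ n).wf ∧ ((σ n).closed ∨ ∃ m, σ n = .var m)

theorem nice_lift {σ : ℕ → SType A} (h : Nice σ) : Nice (liftS σ) := by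
  intro n
  cases n with
  | zero => exact ⟨trivial, Or.inr ⟨0, rfl⟩⟩
  | succ n =>
      rcases h n with ⟨hw, hc | ⟨m, hm⟩⟩
      · exact ⟨wf_rename hw (fun a b => by omega), Or.inl (rename_closedUnder hc (by omega))⟩
      · refine ⟨?_, Or.inr ⟨m + 1, by simp [liftS, hm, rename]⟩⟩
        simp only [liftS, hm, rename]; trivial

theorem wf_subst {T : SType A} : ∀ {σ : ℕ → SType A}, T.wf → Nice σ → (T.subst σ).wf := by
  induction T with
  | end_ => intros; trivial
  | choice p d br ih => intro σ hw hσ; exact ⟨hw.1, fun a ha => ih a (hw.2 a ha) hσ⟩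
  | mu T ih =>
      intro σ hw hσ
      refine ⟨ih hw.1 (nice_lift hσ), ?_⟩
      refine guardedVar_subst hw.2 rfl ?_
      intro n hn
      cases n with
      | zero => omega
      | succ n =>
          rcases hσ n with ⟨hw', hc | ⟨m, hm⟩⟩
          · exact guardedVar_of_closedUnder
              (rename_closedUnder (j := 0) hc (by omega)) (by omega)
          · show ((σ n).rename Nat.succ).guardedVar 0
            simp [hm, rename, guardedVar]
  | var n => intro σ hw hσ; exact (hσ n).1

theorem unfold_closed {T : SType A} (hw : (SType.mu T).wf) (hc : (SType.mu T).closed) :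
    T.unfold.closed := by
  refine subst_closedUnder (k := 1) hc ?_
  intro n hn
  interval_cases n
  exact hc

theorem unfold_wf {T : SType A} (hw : (SType.mu T).wf) (hc : (SType.mu T).closed) :
    T.unfold.wf := by
  refine wf_subst hw.1 ?_
  intro n
  cases n with
  | zero => exact ⟨hw, Or.inl hc⟩
  | succ n => exact ⟨trivial, Or.inr ⟨n, rfl⟩⟩

/-- The length of the leading `mu`-spine. -/
def spineLen : SType A → ℕ
  | .mu T => spineLen T + 1
  | _ => 0

theorem spineLen_subst {T : SType A} : ∀ {σ : ℕ → SType A} {k}, T.wf → T.closedUnder k →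
    (∀ x, x < k → T.guardedVar x) → spineLen (T.subst σ) = spineLen T := by
  induction T with
  | end_ => intros; rfl
  | choice p d br ih => intros; rfl
  | mu T ih =>
      intro σ k hw hc hg
      show spineLen (T.subst (liftS σ)) + 1 = spineLen T + 1
      rw [ih (σ := liftS σ) (k := k + 1) hw.1 hc ?_]
      intro x hx
      cases x with
      | zero => exact hw.2
      | succ x => exact hg x (by omega)
  | var n =>
      intro σ k hw hc hg
      exact absurd rfl (hg n hc)

theorem spineLen_unfold {T : SType A} (hw : (SType.mu T).wf) (hc : (SType.mu T).closed) :
    spineLen T.unfold = spineLen T := by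
  refine spineLen_subst hw.1 (k := 1) hc ?_
  intro x hx
  interval_cases x
  exact hw.2

end SType
end SessionCF
namespace SessionCF

variable {A : Type}

theorem step_mu_iff {T : SType A} {α T'} : Step (.mu T) α T' ↔ Step T.unfold α T' := by
  constructor
  · intro h; cases h; assumption
  · exact Step.unf

theorem step_choice_inv {p : Pol} {d : Finset A} {br α T'}
    (h : Step (.choice p d br) α T') : ∃ a, α = (p, a) ∧ a ∈ d ∧ T' = br a := by
  cases h with
  | choice ha => exact ⟨_, rfl, ha, rfl⟩

theorem step_end_inv {α : Act A} {T'} (h : Step .end_ α T') : False := by cases h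

theorem step_var_inv {n : ℕ} {α : Act A} {T'} (h : Step (.var n) α T') : False := by cases h

theorem step_det {T : SType A} {α T₁ T₂} (h₁ : Step T α T₁) (h₂ : Step T α T₂) : T₁ = T₂ := by
  induction h₁ with
  | choice ha =>
      rcases step_choice_inv h₂ with ⟨a, hα, ha', hT⟩
      cases hα; exact hT.symm
  | unf h ih =>
      cases h₂ with
      | unf h' => exact ih h'

theorem step_preserves {T : SType A} {α T'} (h : Step T α T') :
    T.closed → T.wf → T'.closed ∧ T'.wf := by
  induction h with
  | @choice p d br a ha =>
      intro hc hw
      exact ⟨hc a ha, hw.2 a ha⟩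
  | unf h ih =>
      intro hc hw
      exact ih (SType.unfold_closed hw hc) (SType.unfold_wf hw hc)

theorem subStep_mono {s : Pol} {R R' : SType A → SType A → Prop} {T U}
    (h : SubStep s R T U) (hRR : ∀ x y, R x y → R' x y) : SubStep s R' T U := by
  rcases h with h | ⟨dT, brT, dU, brU, h1, h2, h3, h4⟩ | ⟨dT, brT, dU, brU, h1, h2, h3, h4⟩ |
    ⟨T₀, h1, h2⟩ | ⟨U₀, h1, h2⟩
  · exact Or.inl h
  · exact Or.inr (Or.inl ⟨dT, brT, dU, brU, h1, h2, h3, fun a ha => hRR _ _ (h4 a ha)⟩)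
  · exact Or.inr (Or.inr (Or.inl ⟨dT, brT, dU, brU, h1, h2, h3, fun a ha => hRR _ _ (h4 a ha)⟩))
  · exact Or.inr (Or.inr (Or.inr (Or.inl ⟨T₀, h1, hRR _ _ h2⟩)))
  · exact Or.inr (Or.inr (Or.inr (Or.inr ⟨U₀, h1, hRR _ _ h2⟩)))

theorem subtype_destruct {s : Pol} {T U : SType A} (h : Subtype s T U) :
    SubStep s (Subtype s) T U := by
  rcases h with ⟨R, hR, hTU⟩
  exact subStep_mono (hR _ _ hTU) (fun x y hxy => ⟨R, hR, hxy⟩)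

theorem subtype_of_subStep {s : Pol} {T U : SType A} (h : SubStep s (Subtype s) T U) :
    Subtype s T U := by
  refine ⟨fun x y => Subtype s x y ∨ (x = T ∧ y = U), ?_, Or.inr ⟨rfl, rfl⟩⟩
  rintro x y (hxy | ⟨rfl, rfl⟩)
  · exact subStep_mono (subtype_destruct hxy) (fun _ _ => Or.inl)
  · exact subStep_mono h (fun _ _ => Or.inl)

theorem subtype_fold_r {s : Pol} {X Y : SType A} (h : Subtype s X Y.unfold) :
    Subtype s X (.mu Y) := by
  exact subtype_of_subStep (Or.inr (Or.inr (Or.inr (Or.inr ⟨Y, rfl, h⟩))))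

theorem subtype_fold_l {s : Pol} {X Y : SType A} (h : Subtype s X.unfold Y) :
    Subtype s (.mu X) Y := by
  exact subtype_of_subStep (Or.inr (Or.inr (Or.inr (Or.inl ⟨X, rfl, h⟩))))

theorem subtype_mu_l {s : Pol} {V T : SType A} (hc : T.closed) (hw : T.wf)
    (h : Subtype s (.mu V) T) : Subtype s V.unfold T := by
  obtain ⟨n, hn⟩ : ∃ n, SType.spineLen T ≤ n := ⟨_, le_refl _⟩
  induction n generalizing T with
  | zero =>
      rcases subtype_destruct h with ⟨h1, _⟩ | ⟨dT, brT, dU, brU, h1, _⟩ |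
        ⟨dT, brT, dU, brU, h1, _⟩ | ⟨T₀, h1, h2⟩ | ⟨U₀, h1, h2⟩
      · exact absurd h1 (by simp)
      · exact absurd h1 (by simp)
      · exact absurd h1 (by simp)
      · rw [SType.mu.injEq] at h1; subst h1; exact h2
      · subst h1; simp [SType.spineLen] at hn
  | succ n ih =>
      rcases subtype_destruct h with ⟨h1, _⟩ | ⟨dT, brT, dU, brU, h1, _⟩ |
        ⟨dT, brT, dU, brU, h1, _⟩ | ⟨T₀, h1, h2⟩ | ⟨U₀, h1, h2⟩
      · exact absurd h1 (by simp)
      · exact absurd h1 (by simp)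
      · exact absurd h1 (by simp)
      · rw [SType.mu.injEq] at h1; subst h1; exact h2
      · subst h1
        have hwU : (SType.mu U₀).wf := hw
        have hcU : (SType.mu U₀).closed := hc
        refine subtype_fold_r (ih (SType.unfold_closed hwU hcU) (SType.unfold_wf hwU hcU) h2 ?_)
        rw [SType.spineLen_unfold hwU hcU]
        simp [SType.spineLen] at hn
        omega

theorem subtype_mu_r {s : Pol} {U V : SType A} (hc : U.closed) (hw : U.wf)
    (h : Subtype s U (.mu V)) : Subtype s U V.unfold := by
  obtain ⟨n, hn⟩ : ∃ n, SType.spineLen U ≤ n := ⟨_, le_refl _⟩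
  induction n generalizing U with
  | zero =>
      rcases subtype_destruct h with ⟨_, h1⟩ | ⟨dT, brT, dU, brU, _, h1, _⟩ |
        ⟨dT, brT, dU, brU, _, h1, _⟩ | ⟨T₀, h1, h2⟩ | ⟨U₀, h1, h2⟩
      · exact absurd h1 (by simp)
      · exact absurd h1 (by simp)
      · exact absurd h1 (by simp)
      · subst h1; simp [SType.spineLen] at hn
      · rw [SType.mu.injEq] at h1; subst h1; exact h2
  | succ n ih =>
      rcases subtype_destruct h with ⟨_, h1⟩ | ⟨dT, brT, dU, brU, _, h1, _⟩ |
        ⟨dT, brT, dU, brU, _, h1, _⟩ | ⟨T₀, h1, h2⟩ | ⟨U₀, h1, h2⟩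
      · exact absurd h1 (by simp)
      · exact absurd h1 (by simp)
      · exact absurd h1 (by simp)
      · subst h1
        have hwT : (SType.mu T₀).wf := hw
        have hcT : (SType.mu T₀).closed := hc
        refine subtype_fold_l (ih (SType.unfold_closed hwT hcT) (SType.unfold_wf hwT hcT) h2 ?_)
        rw [SType.spineLen_unfold hwT hcT]
        simp [SType.spineLen] at hn
        omega
      · rw [SType.mu.injEq] at h1; subst h1; exact h2

/-- `T` is not a `mu`. -/
def notMu (T : SType A) : Prop := ∀ T₀, T ≠ .mu T₀

/-- Full unfolding of the leading `mu`-spine. -/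
inductive Unf : SType A → SType A → Prop
  | base {T : SType A} : notMu T → Unf T T
  | step {T H : SType A} : Unf T.unfold H → Unf (.mu T) H

theorem unf_exists {T : SType A} (hc : T.closed) (hw : T.wf) :
    ∃ H, Unf T H ∧ H.closed ∧ H.wf ∧ notMu H := by
  obtain ⟨n, hn⟩ : ∃ n, SType.spineLen T ≤ n := ⟨_, le_refl _⟩
  induction n generalizing T with
  | zero =>
      cases T with
      | end_ => exact ⟨_, Unf.base (by intro x h; cases h), hc, hw, by intro x h; cases h⟩
      | choice p d br => exact ⟨_, Unf.base (by intro x h; cases h), hc, hw, by intro x h; cases h⟩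
      | mu T => simp [SType.spineLen] at hn
      | var m => exact absurd hc (by simp [SType.closed, SType.closedUnder])
  | succ n ih =>
      cases T with
      | end_ => exact ⟨_, Unf.base (by intro x h; cases h), hc, hw, by intro x h; cases h⟩
      | choice p d br => exact ⟨_, Unf.base (by intro x h; cases h), hc, hw, by intro x h; cases h⟩
      | var m => exact absurd hc (by simp [SType.closed, SType.closedUnder])
      | mu T =>
          obtain ⟨H, h1, h2, h3, h4⟩ := ih (SType.unfold_closed hw hc) (SType.unfold_wf hw hc)
            (by rw [SType.spineLen_unfold hw hc]; simp [SType.spineLen] at hn; omega)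
          exact ⟨H, Unf.step h1, h2, h3, h4⟩

theorem unf_subtype {s : Pol} {U T H : SType A} (h : Unf T H) (hcU : U.closed) (hwU : U.wf) :
    Subtype s U T → Subtype s U H := by
  induction h with
  | base _ => exact id
  | step _ ih => intro hs; exact ih (subtype_mu_r hcU hwU hs)

theorem sat_of_mu {X : SType A} {φ} (h : Sat X φ) : ∀ T, X = .mu T → Sat T.unfold φ := by
  induction h with
  | tt => intro T hT; exact Sat.tt
  | and h1 h2 ih1 ih2 => intro T hT; exact Sat.and (ih1 T hT) (ih2 T hT)
  | orl h ih => intro T hT; exact Sat.orl (ih T hT)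
  | orr h ih => intro T hT; exact Sat.orr (ih T hT)
  | box h ih => intro T hT; subst hT; exact Sat.box fun T' hs => h T' (Step.unf hs)
  | dia hs hφ ih => intro T hT; subst hT; exact Sat.dia (step_mu_iff.mp hs) hφ
  | nu h ih => intro T hT; exact Sat.nu fun n => ih n T hT

theorem sat_mu_of {X : SType A} {φ} (h : Sat X φ) : ∀ T, X = T.unfold → Sat (.mu T) φ := by
  induction h with
  | tt => intro T hT; exact Sat.tt
  | and h1 h2 ih1 ih2 => intro T hT; exact Sat.and (ih1 T hT) (ih2 T hT)
  | orl h ih => intro T hT; exact Sat.orl (ih T hT)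
  | orr h ih => intro T hT; exact Sat.orr (ih T hT)
  | box h ih => intro T hT; subst hT; exact Sat.box fun T' hs => h T' (step_mu_iff.mp hs)
  | dia hs hφ ih => intro T hT; subst hT; exact Sat.dia (Step.unf hs) hφ
  | nu h ih => intro T hT; exact Sat.nu fun n => ih n T hT

theorem unf_sat {T H : SType A} (h : Unf T H) {φ} (hs : Sat H φ) : Sat T φ := by
  induction h with
  | base _ => exact hs
  | step _ ih => exact sat_mu_of (ih hs) _ rfl

theorem unf_sat_rev {T H : SType A} (h : Unf T H) {φ} (hs : Sat T φ) : Sat H φ := by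
  induction h with
  | base _ => exact hs
  | step _ ih => exact ih (sat_of_mu hs _ rfl)

theorem sat_ff {T : SType A} (h : Sat T .ff) : False := by cases h

theorem sat_and_inv {T : SType A} {φ ψ} (h : Sat T (.and φ ψ)) : Sat T φ ∧ Sat T ψ := by
  cases h with | and h1 h2 => exact ⟨h1, h2⟩

theorem sat_or_inv {T : SType A} {φ ψ} (h : Sat T (.or φ ψ)) : Sat T φ ∨ Sat T ψ := by
  cases h with
  | orl h => exact Or.inl h
  | orr h => exact Or.inr h

theorem sat_box_inv {T : SType A} {α φ} (h : Sat T (.box α φ)) :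
    ∀ T', Step T α T' → Sat T' φ := by
  cases h with | box h => exact h

theorem sat_dia_inv {T : SType A} {α φ} (h : Sat T (.dia α φ)) :
    ∃ T', Step T α T' ∧ Sat T' φ := by
  cases h with | dia hs hφ => exact ⟨_, hs, hφ⟩

theorem sat_nu_inv {T : SType A} {φ} (h : Sat T (.nu φ)) :
    ∀ n, Sat T (φ.nuApprox n) := by
  cases h with | nu h => exact h

theorem sat_bigAnd {A : Type} [Fintype A] [LinearOrder A] {T : SType A} {l : List (Formula A)}
    (h : ∀ φ ∈ l, Sat T φ) : Sat T (bigAnd l) := by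
  induction l with
  | nil => exact Sat.tt
  | cons φ rest ih => exact Sat.and (h φ (by simp)) (ih fun ψ hψ => h ψ (by simp [hψ]))

theorem sat_bigAnd_inv {A : Type} [Fintype A] [LinearOrder A] {T : SType A}
    {l : List (Formula A)} (h : Sat T (bigAnd l)) : ∀ φ ∈ l, Sat T φ := by
  induction l with
  | nil => simp
  | cons φ rest ih =>
      rcases sat_and_inv h with ⟨h1, h2⟩
      intro ψ hψ
      rcases List.mem_cons.mp hψ with rfl | hψ
      · exact h1
      · exact ih h2 ψ hψ

theorem sat_bigOr {A : Type} [Fintype A] [LinearOrder A] {T : SType A} {l : List (Formula A)}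
    {φ} (hφ : φ ∈ l) (h : Sat T φ) : Sat T (bigOr l) := by
  induction l with
  | nil => cases hφ
  | cons ψ rest ih =>
      rcases List.mem_cons.mp hφ with rfl | hφ
      · exact Sat.orl h
      · exact Sat.orr (ih hφ)

theorem sat_bigOr_inv {A : Type} [Fintype A] [LinearOrder A] {T : SType A}
    {l : List (Formula A)} (h : Sat T (bigOr l)) : ∃ φ ∈ l, Sat T φ := by
  induction l with
  | nil => exact absurd h sat_ff
  | cons ψ rest ih =>
      rcases sat_or_inv h with h1 | h2
      · exact ⟨ψ, by simp, h1⟩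
      · rcases ih h2 with ⟨φ, hφ, hs⟩
        exact ⟨φ, by simp [hφ], hs⟩

end SessionCF
namespace SessionCF
namespace Formula

variable {A : Type}

open SType (liftR liftR_comp liftR_inj)

theorem rename_rename (φ : Formula A) : ∀ f g, (φ.rename f).rename g = φ.rename (fun n => g (f n)) := by
  induction φ with
  | tt => intros; rfl
  | ff => intros; rfl
  | and φ ψ ih1 ih2 => intro f g; simp [rename, ih1, ih2]
  | or φ ψ ih1 ih2 => intro f g; simp [rename, ih1, ih2]
  | box α φ ih => intro f g; simp [rename, ih]
  | dia α φ ih => intro f g; simp [rename, ih]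
  | nu φ ih => intro f g; simp [rename, ih, liftR_comp]
  | var n => intros; rfl

theorem liftF_liftR (τ : ℕ → Formula A) (f : ℕ → ℕ) :
    (fun n => liftF τ (liftR f n)) = liftF (fun n => τ (f n)) := by
  funext n; cases n <;> simp [liftF, liftR]

theorem rename_subst (φ : Formula A) : ∀ f τ, (φ.rename f).subst τ = φ.subst (fun n => τ (f n)) := by
  induction φ with
  | tt => intros; rfl
  | ff => intros; rfl
  | and φ ψ ih1 ih2 => intro f τ; simp [rename, subst, ih1, ih2]
  | or φ ψ ih1 ih2 => intro f τ; simp [rename, subst, ih1, ih2]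
  | box α φ ih => intro f τ; simp [rename, subst, ih]
  | dia α φ ih => intro f τ; simp [rename, subst, ih]
  | nu φ ih => intro f τ; simp [rename, subst, ih, liftF_liftR]
  | var n => intros; rfl

theorem liftF_rename (τ : ℕ → Formula A) (f : ℕ → ℕ) :
    (fun n => (liftF τ n).rename (liftR f)) = liftF (fun n => (τ n).rename f) := by
  funext n; cases n with
  | zero => simp [liftF, rename, liftR]
  | succ n => simp [liftF, rename_rename]; rfl

theorem subst_rename (φ : Formula A) : ∀ τ f, (φ.subst τ).rename f = φ.subst (fun n => (τ n).rename f) := by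
  induction φ with
  | tt => intros; rfl
  | ff => intros; rfl
  | and φ ψ ih1 ih2 => intro τ f; simp [rename, subst, ih1, ih2]
  | or φ ψ ih1 ih2 => intro τ f; simp [rename, subst, ih1, ih2]
  | box α φ ih => intro τ f; simp [rename, subst, ih]
  | dia α φ ih => intro τ f; simp [rename, subst, ih]
  | nu φ ih => intro τ f; simp [rename, subst, ih, liftF_rename]
  | var n => intros; rfl

theorem liftF_liftF (τ τ' : ℕ → Formula A) :
    (fun n => (liftF τ n).subst (liftF τ')) = liftF (fun n => (τ n).subst τ') := by
  funext n; cases n with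
  | zero => simp [liftF, subst]
  | succ n => simp [liftF, rename_subst, subst_rename]

theorem subst_subst (φ : Formula A) : ∀ τ τ', (φ.subst τ).subst τ' = φ.subst (fun n => (τ n).subst τ') := by
  induction φ with
  | tt => intros; rfl
  | ff => intros; rfl
  | and φ ψ ih1 ih2 => intro τ τ'; simp [subst, ih1, ih2]
  | or φ ψ ih1 ih2 => intro τ τ'; simp [subst, ih1, ih2]
  | box α φ ih => intro τ τ'; simp [subst, ih]
  | dia α φ ih => intro τ τ'; simp [subst, ih]
  | nu φ ih => intro τ τ'; simp [subst, ih, liftF_liftF]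
  | var n => intros; rfl

theorem subst_var (φ : Formula A) : φ.subst .var = φ := by
  induction φ with
  | tt => rfl
  | ff => rfl
  | and φ ψ ih1 ih2 => simp [subst, ih1, ih2]
  | or φ ψ ih1 ih2 => simp [subst, ih1, ih2]
  | box α φ ih => simp [subst, ih]
  | dia α φ ih => simp [subst, ih]
  | nu φ ih =>
      simp only [subst]
      have : (liftF (.var : ℕ → Formula A)) = .var := by
        funext n; cases n <;> simp [liftF, rename]
      rw [this, ih]
  | var n => rfl

theorem rename_closedUnder {φ : Formula A} : ∀ {k j} {f : ℕ → ℕ}, φ.closedUnder k →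
    (∀ x, x < k → f x < j) → (φ.rename f).closedUnder j := by
  induction φ with
  | tt => intros; trivial
  | ff => intros; trivial
  | and φ ψ ih1 ih2 => intro k j f hc hf; exact ⟨ih1 hc.1 hf, ih2 hc.2 hf⟩
  | or φ ψ ih1 ih2 => intro k j f hc hf; exact ⟨ih1 hc.1 hf, ih2 hc.2 hf⟩
  | box α φ ih => intro k j f hc hf; exact ih hc hf
  | dia α φ ih => intro k j f hc hf; exact ih hc hf
  | nu φ ih =>
      intro k j f hc hf
      exact ih hc (by intro x hx; cases x with
        | zero => simp [liftR]
        | succ x => simpa [liftR] using hf x (by omega))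
  | var n => intro k j f hc hf; exact hf n hc

theorem subst_closedUnder {φ : Formula A} : ∀ {k j} {τ : ℕ → Formula A}, φ.closedUnder k →
    (∀ n, n < k → (τ n).closedUnder j) → (φ.subst τ).closedUnder j := by
  induction φ with
  | tt => intros; trivial
  | ff => intros; trivial
  | and φ ψ ih1 ih2 => intro k j τ hc hτ; exact ⟨ih1 hc.1 hτ, ih2 hc.2 hτ⟩
  | or φ ψ ih1 ih2 => intro k j τ hc hτ; exact ⟨ih1 hc.1 hτ, ih2 hc.2 hτ⟩
  | box α φ ih => intro k j τ hc hτ; exact ih hc hτ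
  | dia α φ ih => intro k j τ hc hτ; exact ih hc hτ
  | nu φ ih =>
      intro k j τ hc hτ
      refine ih hc ?_
      intro n hn
      cases n with
      | zero => show (0:ℕ) < j + 1; omega
      | succ n => exact rename_closedUnder (hτ n (by omega)) (by omega)
  | var n => intro k j τ hc hτ; exact hτ n hc

/-- Instantiation through a lifted substitution. -/
theorem inst_lift (φ : Formula A) (τ : ℕ → Formula A) (χ : Formula A) :
    (φ.subst (liftF τ)).inst χ = φ.subst (consF χ τ) := by
  show (φ.subst (liftF τ)).subst (consF χ .var) = _
  rw [subst_subst]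
  congr 1
  funext n
  cases n with
  | zero => rfl
  | succ n =>
      show ((τ n).rename Nat.succ).subst (consF χ .var) = τ n
      rw [rename_subst]
      exact subst_var (τ n)

theorem nuApprox_closedUnder {ψ : Formula A} (hc : ψ.closedUnder 1) :
    ∀ n, (ψ.nuApprox n).closedUnder 0 := by
  intro n
  induction n with
  | zero => trivial
  | succ n ih =>
      show ((ψ.subst (consF (ψ.nuApprox n) .var))).closedUnder 0
      refine subst_closedUnder hc ?_
      intro m hm
      interval_cases m
      exact ih

end Formula

namespace SType

theorem subst_lift_unfold {A : Type} (U : SType A) (σ : ℕ → SType A) (V : SType A) :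
    (U.subst (liftS σ)).subst (consS V .var) = U.subst (consS V σ) := by
  rw [subst_subst]
  congr 1
  funext n
  cases n with
  | zero => rfl
  | succ n =>
      show ((σ n).rename Nat.succ).subst (consS V .var) = σ n
      rw [rename_subst]
      exact subst_var (σ n)

end SType
end SessionCF
namespace SessionCF

variable {A : Type}

open Formula (liftF consF inst_lift)

theorem nuApprox_succ (ψ : Formula A) (n : ℕ) :
    ψ.nuApprox (n + 1) = ψ.inst (ψ.nuApprox n) := rfl

theorem nuApprox_lift (φ : Formula A) (τ : ℕ → Formula A) (m : ℕ) :
    (φ.subst (liftF τ)).nuApprox (m + 1) =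
      φ.subst (consF ((φ.subst (liftF τ)).nuApprox m) τ) := by
  rw [nuApprox_succ, inst_lift]

theorem sat_mono : ∀ (φ : Formula A) (τ τ' : ℕ → Formula A),
    (∀ x T, Sat T (τ x) → Sat T (τ' x)) →
    ∀ T, Sat T (φ.subst τ) → Sat T (φ.subst τ') := by
  intro φ
  induction φ with
  | tt => intro τ τ' hττ T h; exact Sat.tt
  | ff => intro τ τ' hττ T h; exact absurd h sat_ff
  | and φ ψ ih1 ih2 =>
      intro τ τ' hττ T h
      rcases sat_and_inv h with ⟨h1, h2⟩
      exact Sat.and (ih1 τ τ' hττ T h1) (ih2 τ τ' hττ T h2)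
  | or φ ψ ih1 ih2 =>
      intro τ τ' hττ T h
      rcases sat_or_inv h with h1 | h2
      · exact Sat.orl (ih1 τ τ' hττ T h1)
      · exact Sat.orr (ih2 τ τ' hττ T h2)
  | box α φ ih =>
      intro τ τ' hττ T h
      exact Sat.box fun T' hs => ih τ τ' hττ T' (sat_box_inv h T' hs)
  | dia α φ ih =>
      intro τ τ' hττ T h
      rcases sat_dia_inv h with ⟨T', hs, hφ⟩
      exact Sat.dia hs (ih τ τ' hττ T' hφ)
  | nu φ ih =>
      intro τ τ' hττ T h
      have key : ∀ m T', Sat T' ((φ.subst (liftF τ)).nuApprox m) →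
          Sat T' ((φ.subst (liftF τ')).nuApprox m) := by
        intro m
        induction m with
        | zero => intro T' _; exact Sat.tt
        | succ m ihm =>
            intro T' h'
            rw [nuApprox_lift] at h' ⊢
            refine ih _ _ ?_ T' h'
            intro x T''
            cases x with
            | zero => exact ihm T''
            | succ x => exact hττ x T''
      exact Sat.nu fun m => key m T (sat_nu_inv h m)
  | var x => intro τ τ' hττ T h; exact hττ x T h

theorem approx_mono_subst (φ : Formula A) (τ τ' : ℕ → Formula A)
    (hττ : ∀ x T, Sat T (τ x) → Sat T (τ' x)) :
    ∀ m T, Sat T ((φ.subst (liftF τ)).nuApprox m) →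
      Sat T ((φ.subst (liftF τ')).nuApprox m) := by
  intro m
  induction m with
  | zero => intro T _; exact Sat.tt
  | succ m ihm =>
      intro T h
      rw [nuApprox_lift] at h ⊢
      refine sat_mono φ _ _ ?_ T h
      intro x T'
      cases x with
      | zero => exact ihm T'
      | succ x => exact hττ x T'

theorem approx_anti (ψ : Formula A) : ∀ n T, Sat T (ψ.nuApprox (n + 1)) → Sat T (ψ.nuApprox n) := by
  intro n
  induction n with
  | zero => intro T _; exact Sat.tt
  | succ n ihn =>
      intro T h
      show Sat T (ψ.subst (consF (ψ.nuApprox n) .var))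
      have h' : Sat T (ψ.subst (consF (ψ.nuApprox (n + 1)) .var)) := h
      refine sat_mono ψ _ _ ?_ T h'
      intro x T'
      cases x with
      | zero => exact ihn T'
      | succ x => exact id

theorem sat_down (φ : Formula A) (τ : ℕ → ℕ → Formula A)
    (hA : ∀ n x T, Sat T (τ (n + 1) x) → Sat T (τ n x)) :
    ∀ m m', m ≤ m' → ∀ T, Sat T (φ.subst (τ m')) → Sat T (φ.subst (τ m)) := by
  intro m m' hm
  induction m', hm using Nat.le_induction with
  | base => intro T; exact id
  | succ m' hm ih => intro T h; exact ih T (sat_mono φ _ _ (hA m') T h)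

theorem sat_limit : ∀ (φ : Formula A) (τ : ℕ → ℕ → Formula A) (tl : ℕ → Formula A),
    (∀ n x T, Sat T (τ (n + 1) x) → Sat T (τ n x)) →
    (∀ x T, (∀ n, Sat T (τ n x)) → Sat T (tl x)) →
    ∀ T, (∀ n, Sat T (φ.subst (τ n))) → Sat T (φ.subst tl) := by
  intro φ
  induction φ with
  | tt => intro τ tl hA hL T h; exact Sat.tt
  | ff => intro τ tl hA hL T h; exact absurd (h 0) sat_ff
  | and φ ψ ih1 ih2 =>
      intro τ tl hA hL T h
      exact Sat.and (ih1 τ tl hA hL T fun n => (sat_and_inv (h n)).1)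
        (ih2 τ tl hA hL T fun n => (sat_and_inv (h n)).2)
  | or φ ψ ih1 ih2 =>
      intro τ tl hA hL T h
      by_cases hall : ∀ n, Sat T (φ.subst (τ n))
      · exact Sat.orl (ih1 τ tl hA hL T hall)
      · push_neg at hall
        rcases hall with ⟨n₀, hn₀⟩
        refine Sat.orr (ih2 τ tl hA hL T ?_)
        intro n
        rcases sat_or_inv (h (max n n₀)) with h1 | h2
        · exact absurd (sat_down φ τ hA n₀ (max n n₀) (le_max_right _ _) T h1) hn₀
        · exact sat_down ψ τ hA n (max n n₀) (le_max_left _ _) T h2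
  | box α φ ih =>
      intro τ tl hA hL T h
      exact Sat.box fun T' hs => ih τ tl hA hL T' fun n => sat_box_inv (h n) T' hs
  | dia α φ ih =>
      intro τ tl hA hL T h
      rcases sat_dia_inv (h 0) with ⟨T', hs0, _⟩
      refine Sat.dia hs0 (ih τ tl hA hL T' ?_)
      intro n
      rcases sat_dia_inv (h n) with ⟨T'', hs, hφ⟩
      rwa [step_det hs hs0] at hφ
  | var x => intro τ tl hA hL T h; exact hL x T h
  | nu φ ih =>
      intro τ tl hA hL T h
      have key : ∀ m T', (∀ n, Sat T' ((φ.subst (liftF (τ n))).nuApprox m)) →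
          Sat T' ((φ.subst (liftF tl)).nuApprox m) := by
        intro m
        induction m with
        | zero => intro T' _; exact Sat.tt
        | succ m ihm =>
            intro T' h'
            rw [nuApprox_lift]
            refine ih (fun n => consF ((φ.subst (liftF (τ n))).nuApprox m) (τ n))
              (consF ((φ.subst (liftF tl)).nuApprox m) tl) ?_ ?_ T' ?_
            · intro n x T''
              cases x with
              | zero => exact approx_mono_subst φ (τ (n + 1)) (τ n) (hA n) m T''
              | succ x => exact hA n x T''
            · intro x T''
              cases x with
              | zero => exact ihm T''
              | succ x => exact hL x T''
            · intro n
              rw [← nuApprox_lift]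
              exact h' n
      exact Sat.nu fun m => key m T fun n => sat_nu_inv (h n) m

theorem sat_nu_unfold {T : SType A} {ψ : Formula A} (h : Sat T (.nu ψ)) :
    Sat T (ψ.inst (.nu ψ)) := by
  refine sat_limit ψ (fun n => consF (ψ.nuApprox n) .var) (consF (.nu ψ) .var) ?_ ?_ T ?_
  · intro n x T'
    cases x with
    | zero => exact approx_anti ψ n T'
    | succ x => exact id
  · intro x T' hn
    cases x with
    | zero => exact Sat.nu hn
    | succ x => exact hn 0
  · intro n
    exact sat_nu_inv h (n + 1)

end SessionCF
namespace SessionCF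

variable {A : Type} [Fintype A] [LinearOrder A]

theorem bigAnd_subst (l : List (Formula A)) (τ : ℕ → Formula A) :
    (bigAnd l).subst τ = bigAnd (l.map (·.subst τ)) := by
  induction l with
  | nil => rfl
  | cons φ rest ih => simp [bigAnd, Formula.subst, ih]

theorem bigOr_subst (l : List (Formula A)) (τ : ℕ → Formula A) :
    (bigOr l).subst τ = bigOr (l.map (·.subst τ)) := by
  induction l with
  | nil => rfl
  | cons φ rest ih => simp [bigOr, Formula.subst, ih]

theorem bigAnd_rename (l : List (Formula A)) (f : ℕ → ℕ) :
    (bigAnd l).rename f = bigAnd (l.map (·.rename f)) := by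
  induction l with
  | nil => rfl
  | cons φ rest ih => simp [bigAnd, Formula.rename, ih]

theorem bigOr_rename (l : List (Formula A)) (f : ℕ → ℕ) :
    (bigOr l).rename f = bigOr (l.map (·.rename f)) := by
  induction l with
  | nil => rfl
  | cons φ rest ih => simp [bigOr, Formula.rename, ih]

theorem bigAnd_closedUnder {l : List (Formula A)} {k : ℕ}
    (h : ∀ φ ∈ l, Formula.closedUnder φ k) : (bigAnd l).closedUnder k := by
  induction l with
  | nil => trivial
  | cons φ rest ih =>
      exact ⟨h φ (by simp), ih fun ψ hψ => h ψ (by simp [hψ])⟩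

theorem bigOr_closedUnder {l : List (Formula A)} {k : ℕ}
    (h : ∀ φ ∈ l, Formula.closedUnder φ k) : (bigOr l).closedUnder k := by
  induction l with
  | nil => trivial
  | cons φ rest ih =>
      exact ⟨h φ (by simp), ih fun ψ hψ => h ψ (by simp [hψ])⟩

theorem mem_allActs (α : Act A) : α ∈ allActs A := by
  obtain ⟨p, a⟩ := α
  cases p <;> simp [allActs, List.mem_append, List.mem_map, Finset.mem_sort]

theorem charF_rename (T : SType A) : ∀ (f : ℕ → ℕ) (s : Pol),
    charF (T.rename f) s = (charF T s).rename f := by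
  induction T with
  | end_ =>
      intro f s
      simp [charF, SType.rename, bigAnd_rename, List.map_map, Function.comp_def, Formula.rename]
  | choice p d br ih =>
      intro f s
      by_cases hps : p = s
      · simp [charF, SType.rename, hps, bigAnd_rename, List.map_map, Function.comp_def,
          Formula.rename, ih]
      · simp [charF, SType.rename, hps, bigAnd_rename, bigOr_rename, List.map_map,
          Function.comp_def, Formula.rename, ih]
  | mu T ih =>
      intro f s
      simp [charF, SType.rename, Formula.rename, ih]
  | var n => intro f s; rfl

theorem charF_subst (T : SType A) : ∀ (σ : ℕ → SType A) (s : Pol),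
    charF (T.subst σ) s = (charF T s).subst (fun n => charF (σ n) s) := by
  induction T with
  | end_ =>
      intro σ s
      simp [charF, SType.subst, bigAnd_subst, List.map_map, Function.comp_def, Formula.subst]
  | choice p d br ih =>
      intro σ s
      by_cases hps : p = s
      · simp [charF, SType.subst, hps, bigAnd_subst, List.map_map, Function.comp_def,
          Formula.subst, ih]
      · simp [charF, SType.subst, hps, bigAnd_subst, bigOr_subst, List.map_map,
          Function.comp_def, Formula.subst, ih]
  | mu T ih =>
      intro σ s
      simp only [charF, SType.subst, Formula.subst, ih]
      congr 1
      congr 1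
      funext n
      cases n with
      | zero => rfl
      | succ n =>
          show charF ((σ n).rename Nat.succ) s = (charF (σ n) s).rename Nat.succ
          exact charF_rename (σ n) Nat.succ s
  | var n => intro σ s; rfl

theorem charF_closedUnder {T : SType A} : ∀ {k} (s : Pol), T.closedUnder k →
    (charF T s).closedUnder k := by
  induction T with
  | end_ =>
      intro k s hc
      refine bigAnd_closedUnder ?_
      intro φ hφ
      rcases List.mem_map.mp hφ with ⟨α, _, rfl⟩
      trivial
  | choice p d br ih =>
      intro k s hc
      by_cases hps : p = s
      · simp only [charF, if_pos hps]
        refine bigAnd_closedUnder ?_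
        intro φ hφ
        rcases List.mem_map.mp hφ with ⟨a, ha, rfl⟩
        exact ih a s (hc a (by rwa [Finset.mem_sort] at ha))
      · simp only [charF, if_neg hps]
        refine ⟨?_, ?_, ?_⟩
        · refine bigAnd_closedUnder ?_
          intro φ hφ
          rcases List.mem_map.mp hφ with ⟨a, ha, rfl⟩
          exact ih a s (hc a (by rwa [Finset.mem_sort] at ha))
        · refine bigOr_closedUnder ?_
          intro φ hφ
          rcases List.mem_map.mp hφ with ⟨a, ha, rfl⟩
          trivial
        · refine bigAnd_closedUnder ?_
          intro φ hφ
          rcases List.mem_map.mp hφ with ⟨α, hα, rfl⟩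
          trivial
  | mu T ih => intro k s hc; exact ih s hc
  | var n => intro k s hc; exact hc

end SessionCF
namespace SessionCF

variable {A : Type} [Fintype A] [LinearOrder A]

theorem charF_end : charF (.end_ : SType A) .recv =
    bigAnd ((allActs A).map (fun α => .box α .ff)) := rfl

theorem charF_mu (T : SType A) : charF (.mu T) .recv = .nu (charF T .recv) := rfl

theorem charF_choice_pos (d : Finset A) (br : A → SType A) :
    charF (.choice .recv d br) .recv =
      bigAnd ((d.sort (· ≤ ·)).map (fun a => .dia (.recv, a) (charF (br a) .recv))) := by
  simp [charF]

theorem charF_choice_neg (d : Finset A) (br : A → SType A) :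
    charF (.choice .send d br) .recv =
      .and (bigAnd ((d.sort (· ≤ ·)).map (fun a => .box (.send, a) (charF (br a) .recv))))
        (.and (bigOr ((d.sort (· ≤ ·)).map (fun a => Formula.dia (.send, a) .tt)))
          (bigAnd (((allActs A).filter
              (fun α => ¬ (α.1 = .send ∧ α.2 ∈ d))).map (fun α => .box α .ff)))) := by
  simp [charF]

theorem charF_unfold (U0 : SType A) :
    charF U0.unfold .recv = (charF U0 .recv).inst (.nu (charF U0 .recv)) := by
  show charF (U0.subst (SType.consS (.mu U0) .var)) .recv = _
  rw [charF_subst]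
  show _ = (charF U0 .recv).subst (Formula.consF (.nu (charF U0 .recv)) .var)
  congr 1
  funext n
  cases n <;> rfl

/-- The backward-direction relation. -/
def SatRel (U T : SType A) : Prop :=
  U.closed ∧ U.wf ∧ T.closed ∧ T.wf ∧ Sat T (charF U .recv)

theorem satRel_closure : ∀ U T : SType A, SatRel U T → SubStep .recv SatRel U T := by
  rintro U T ⟨hUc, hUw, hTc, hTw, hsat⟩
  cases U with
  | var n => exact absurd (show n < 0 from hUc) (by omega)
  | mu U0 =>
      refine Or.inr (Or.inr (Or.inr (Or.inl ⟨U0, rfl, ?_, ?_, hTc, hTw, ?_⟩)))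
      · exact SType.unfold_closed hUw hUc
      · exact SType.unfold_wf hUw hUc
      · rw [charF_unfold]
        exact sat_nu_unfold hsat
  | end_ =>
      cases T with
      | var m => exact absurd (show m < 0 from hTc) (by omega)
      | mu T0 =>
          exact Or.inr (Or.inr (Or.inr (Or.inr ⟨T0, rfl, trivial, trivial,
            SType.unfold_closed hTw hTc, SType.unfold_wf hTw hTc, sat_of_mu hsat T0 rfl⟩)))
      | end_ => exact Or.inl ⟨rfl, rfl⟩
      | choice p dT brT =>
          obtain ⟨a, ha⟩ := hTw.1
          rw [charF_end] at hsat
          have hmem : Formula.box (p, a) .ff ∈ (allActs A).map (fun α => Formula.box α .ff) :=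
            List.mem_map.mpr ⟨(p, a), mem_allActs _, rfl⟩
          exact absurd (sat_box_inv (sat_bigAnd_inv hsat _ hmem) (brT a) (Step.choice ha)) sat_ff
  | choice p d br =>
      cases T with
      | var m => exact absurd (show m < 0 from hTc) (by omega)
      | mu T0 =>
          exact Or.inr (Or.inr (Or.inr (Or.inr ⟨T0, rfl, hUc, hUw,
            SType.unfold_closed hTw hTc, SType.unfold_wf hTw hTc, sat_of_mu hsat T0 rfl⟩)))
      | end_ =>
          obtain ⟨a, ha⟩ := hUw.1
          have ha' : a ∈ d.sort (· ≤ ·) := (Finset.mem_sort _).mpr ha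
          cases p with
          | recv =>
              rw [charF_choice_pos] at hsat
              have hmem : Formula.dia (.recv, a) (charF (br a) .recv) ∈
                  (d.sort (· ≤ ·)).map (fun a => Formula.dia (.recv, a) (charF (br a) .recv)) :=
                List.mem_map.mpr ⟨a, ha', rfl⟩
              obtain ⟨T', hs, _⟩ := sat_dia_inv (sat_bigAnd_inv hsat _ hmem)
              exact absurd hs step_end_inv
          | send =>
              rw [charF_choice_neg] at hsat
              obtain ⟨-, hrest⟩ := sat_and_inv hsat
              obtain ⟨hor, -⟩ := sat_and_inv hrest
              obtain ⟨φ, hφmem, hφ⟩ := sat_bigOr_inv hor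
              obtain ⟨a₁, -, rfl⟩ := List.mem_map.mp hφmem
              obtain ⟨T', hs, -⟩ := sat_dia_inv hφ
              exact absurd hs step_end_inv
      | choice q dT brT =>
          cases p with
          | recv =>
              rw [charF_choice_pos] at hsat
              have key : ∀ a ∈ d, q = Pol.recv ∧ a ∈ dT ∧ Sat (brT a) (charF (br a) .recv) := by
                intro a ha
                have ha' : a ∈ d.sort (· ≤ ·) := (Finset.mem_sort _).mpr ha
                have hmem : Formula.dia (.recv, a) (charF (br a) .recv) ∈
                    (d.sort (· ≤ ·)).map (fun a => Formula.dia (.recv, a) (charF (br a) .recv)) :=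
                  List.mem_map.mpr ⟨a, ha', rfl⟩
                obtain ⟨T', hs, hφ⟩ := sat_dia_inv (sat_bigAnd_inv hsat _ hmem)
                obtain ⟨b, hab, hb, hT'⟩ := step_choice_inv hs
                have hq : q = Pol.recv := (congrArg Prod.fst hab).symm
                have hab2 : a = b := congrArg Prod.snd hab
                subst hab2
                subst hT'
                exact ⟨hq, hb, hφ⟩
              obtain ⟨a₀, ha₀⟩ := hUw.1
              obtain ⟨hq, -, -⟩ := key a₀ ha₀
              subst hq
              refine Or.inr (Or.inl ⟨d, br, dT, brT, rfl, rfl, ?_, ?_⟩)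
              · intro a ha; exact (key a ha).2.1
              · intro a ha
                exact ⟨hUc a ha, hUw.2 a ha, hTc a (key a ha).2.1, hTw.2 a (key a ha).2.1,
                  (key a ha).2.2⟩
          | send =>
              rw [charF_choice_neg] at hsat
              obtain ⟨hbox, hrest⟩ := sat_and_inv hsat
              obtain ⟨hor, hff⟩ := sat_and_inv hrest
              obtain ⟨φ, hφmem, hφ⟩ := sat_bigOr_inv hor
              obtain ⟨a₁, ha₁, rfl⟩ := List.mem_map.mp hφmem
              obtain ⟨T', hs, -⟩ := sat_dia_inv hφ
              obtain ⟨b, hab, hb, hT'⟩ := step_choice_inv hs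
              have hq : q = Pol.send := (congrArg Prod.fst hab).symm
              subst hq
              have hsub : dT ⊆ d := by
                intro b hb
                by_contra hbd
                have hmem : Formula.box (Pol.send, b) .ff ∈
                    ((allActs A).filter (fun α => ¬ (α.1 = Pol.send ∧ α.2 ∈ d))).map
                      (fun α => Formula.box α .ff) := by
                  refine List.mem_map.mpr ⟨(Pol.send, b), ?_, rfl⟩
                  refine List.mem_filter.mpr ⟨mem_allActs _, ?_⟩
                  simp [hbd]
                exact absurd (sat_box_inv (sat_bigAnd_inv hff _ hmem) (brT b)
                  (Step.choice hb)) sat_ff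
              refine Or.inr (Or.inr (Or.inl ⟨d, br, dT, brT, rfl, rfl, hsub, ?_⟩))
              intro a ha
              have hmem : Formula.box (Pol.send, a) (charF (br a) .recv) ∈
                  (d.sort (· ≤ ·)).map (fun a => Formula.box (Pol.send, a) (charF (br a) .recv)) :=
                List.mem_map.mpr ⟨a, (Finset.mem_sort _).mpr (hsub ha), rfl⟩
              have hsa := sat_box_inv (sat_bigAnd_inv hbox _ hmem) (brT a) (Step.choice ha)
              exact ⟨hUc a (hsub ha), hUw.2 a (hsub ha), hTc a ha, hTw.2 a ha, hsa⟩

end SessionCF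
namespace SessionCF

variable {A : Type} [Fintype A] [LinearOrder A]

theorem forward (U : SType A) : ∀ (k : ℕ) (V : ℕ → SType A) (χ : ℕ → Formula A),
    U.wf → U.closedUnder k →
    (∀ n, n < k → (V n).closed ∧ (V n).wf) →
    (∀ n, n ≥ k → V n = .var (n - k)) →
    (∀ n, n < k → (χ n).closed) →
    (∀ n, n < k → ∀ T', T'.closed → T'.wf → Subtype .recv (V n) T' → Sat T' (χ n)) →
    ∀ T, T.closed → T.wf → Subtype .recv (U.subst V) T → Sat T ((charF U .recv).subst χ) := by
  induction U with
  | var n =>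
      intro k V χ hw hc hV hVtail hχ hGood T hTc hTw hsub
      exact hGood n hc T hTc hTw hsub
  | end_ =>
      intro k V χ hw hc hV hVtail hχ hGood T hTc hTw hsub
      obtain ⟨H, hUnf, hHc, hHw, hHnm⟩ := unf_exists hTc hTw
      have hsubH : Subtype .recv .end_ H := unf_subtype hUnf trivial trivial hsub
      refine unf_sat hUnf ?_
      have hHend : H = .end_ := by
        rcases subtype_destruct hsubH with ⟨-, h2⟩ | ⟨d1, b1, d2, b2, h1, -⟩ |
          ⟨d1, b1, d2, b2, h1, -⟩ | ⟨T₀, h1, -⟩ | ⟨U₀, h1, -⟩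
        · exact h2
        · exact absurd h1 (by simp)
        · exact absurd h1 (by simp)
        · exact absurd h1 (by simp)
        · exact absurd h1 (hHnm U₀)
      subst hHend
      rw [charF_end, bigAnd_subst]
      refine sat_bigAnd ?_
      intro φ hφ
      rw [List.map_map] at hφ
      rcases List.mem_map.mp hφ with ⟨α, -, rfl⟩
      exact Sat.box fun T' hs => absurd hs step_end_inv
  | mu U0 ih =>
      intro k V χ hw hc hV hVtail hχ hGood T hTc hTw hsub
      have hNice : SType.Nice V := by
        intro n
        by_cases hn : n < k
        · exact ⟨(hV n hn).2, Or.inl (hV n hn).1⟩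
        · rw [hVtail n (by omega)]; exact ⟨trivial, Or.inr ⟨n - k, rfl⟩⟩
      have hmuWc : ((SType.mu U0).subst V).closed :=
        SType.subst_closedUnder hc (fun n hn => (hV n hn).1)
      have hmuWw : ((SType.mu U0).subst V).wf := SType.wf_subst hw hNice
      have key : ∀ n, ∀ T', T'.closed → T'.wf → Subtype .recv ((SType.mu U0).subst V) T' →
          Sat T' (((charF U0 .recv).subst (Formula.liftF χ)).nuApprox n) := by
        intro n
        induction n with
        | zero => intro T' _ _ _; exact Sat.tt
        | succ n ihn =>
            intro T' hT'c hT'w hsub'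
            rw [nuApprox_lift]
            refine ih (k + 1) (SType.consS ((SType.mu U0).subst V) V)
              (Formula.consF (((charF U0 .recv).subst (Formula.liftF χ)).nuApprox n) χ)
              hw.1 hc ?_ ?_ ?_ ?_ T' hT'c hT'w ?_
            · intro m hm
              cases m with
              | zero => exact ⟨hmuWc, hmuWw⟩
              | succ m => exact hV m (by omega)
            · intro m hm
              cases m with
              | zero => omega
              | succ m =>
                  show V m = .var (m + 1 - (k + 1))
                  rw [Nat.succ_sub_succ]
                  exact hVtail m (by omega)
            · intro m hm
              cases m with
              | zero =>
                  refine Formula.nuApprox_closedUnder ?_ n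
                  refine Formula.subst_closedUnder (k := k + 1) (charF_closedUnder _ hc) ?_
                  intro m hm
                  cases m with
                  | zero => show (0:ℕ) < 1; omega
                  | succ m =>
                      exact Formula.rename_closedUnder (hχ m (by omega)) (by omega)
              | succ m => exact hχ m (by omega)
            · intro m hm
              cases m with
              | zero => exact fun T'' c w hs => ihn T'' c w hs
              | succ m => exact hGood m (by omega)
            · have h1 := subtype_mu_l hT'c hT'w hsub'
              have h2 : (U0.subst (SType.liftS V)).unfold =
                  U0.subst (SType.consS ((SType.mu U0).subst V) V) := by
                show (U0.subst (SType.liftS V)).subst _ = _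
                rw [SType.subst_lift_unfold]
                rfl
              rwa [h2] at h1
      exact Sat.nu fun n => key n T hTc hTw hsub
  | choice p d br ih =>
      intro k V χ hw hc hV hVtail hχ hGood T hTc hTw hsub
      have hNice : SType.Nice V := by
        intro n
        by_cases hn : n < k
        · exact ⟨(hV n hn).2, Or.inl (hV n hn).1⟩
        · rw [hVtail n (by omega)]; exact ⟨trivial, Or.inr ⟨n - k, rfl⟩⟩
      have hUVc : ((SType.choice p d br).subst V).closed :=
        SType.subst_closedUnder hc (fun n hn => (hV n hn).1)
      have hUVw : ((SType.choice p d br).subst V).wf := SType.wf_subst hw hNice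
      obtain ⟨H, hUnf, hHc, hHw, hHnm⟩ := unf_exists hTc hTw
      have hsubH := unf_subtype hUnf hUVc hUVw hsub
      refine unf_sat hUnf ?_
      rcases subtype_destruct hsubH with ⟨h1, -⟩ | ⟨d1, b1, d2, b2, h1, h2, h3, h4⟩ |
        ⟨d1, b1, d2, b2, h1, h2, h3, h4⟩ | ⟨T₀, h1, -⟩ | ⟨U₀, h1, -⟩
      · exact absurd h1 (by simp [SType.subst])
      · -- external choice (p = recv)
        injection h1 with hp hd hbr
        subst hp; subst hd; subst hbr; subst h2
        rw [charF_choice_pos, bigAnd_subst]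
        refine sat_bigAnd ?_
        intro φ hφ
        rw [List.map_map] at hφ
        rcases List.mem_map.mp hφ with ⟨a, ha, rfl⟩
        have hamem : a ∈ d := (Finset.mem_sort _).mp ha
        refine Sat.dia (Step.choice (h3 hamem)) ?_
        exact ih a k V χ (hw.2 a hamem) (hc a hamem) hV hVtail hχ hGood (b2 a)
          (hHc a (h3 hamem)) (hHw.2 a (h3 hamem)) (h4 a hamem)
      · -- internal choice (p = send)
        injection h1 with hp hd hbr
        simp only [Pol.dual] at hp
        subst hp; subst hd; subst hbr
        simp only [Pol.dual] at h2
        subst h2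
        rw [charF_choice_neg]
        refine Sat.and ?_ (Sat.and ?_ ?_)
        · rw [bigAnd_subst]
          refine sat_bigAnd ?_
          intro φ hφ
          rw [List.map_map] at hφ
          rcases List.mem_map.mp hφ with ⟨a, ha, rfl⟩
          have hamem : a ∈ d := (Finset.mem_sort _).mp ha
          refine Sat.box ?_
          intro T' hs
          rcases step_choice_inv hs with ⟨b, hab, hb, rfl⟩
          have hab2 : a = b := congrArg Prod.snd hab
          subst hab2
          exact ih a k V χ (hw.2 a hamem) (hc a hamem) hV hVtail hχ hGood (b2 a)
            (hHc a hb) (hHw.2 a hb) (h4 a hb)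
        · rw [bigOr_subst]
          obtain ⟨a₀, ha₀⟩ := hHw.1
          have ha₀d : a₀ ∈ d := h3 ha₀
          have hmem : (Formula.dia (Pol.send, a₀) Formula.tt).subst χ ∈
              ((d.sort (· ≤ ·)).map (fun a => Formula.dia (Pol.send, a) Formula.tt)).map
                (·.subst χ) := by
            refine List.mem_map.mpr ⟨_, List.mem_map.mpr ⟨a₀, (Finset.mem_sort _).mpr ha₀d, rfl⟩, rfl⟩
          exact sat_bigOr hmem (Sat.dia (Step.choice ha₀) Sat.tt)
        · rw [bigAnd_subst]
          refine sat_bigAnd ?_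
          intro φ hφ
          rw [List.map_map] at hφ
          rcases List.mem_map.mp hφ with ⟨α, hα, rfl⟩
          refine Sat.box ?_
          intro T' hs
          rcases step_choice_inv hs with ⟨b, hab, hb, rfl⟩
          subst hab
          rcases List.mem_filter.mp hα with ⟨-, hcond⟩
          simp at hcond
          exact absurd (h3 hb) hcond
      · exact absurd h1 (by simp [SType.subst])
      · exact absurd h1 (hHnm U₀)

end SessionCF

/-- For all closed session types `T`, `U`:
`U ≽ T` iff `T ⊨ F(U, &)`, where `≽` is `≤_&`. -/
theorem sup_iff_sat_charF_recv {A : Type} [Fintype A] [LinearOrder A]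
    (T U : SessionCF.SType A)
    (hTwf : T.wf) (hTcl : T.closed) (hUwf : U.wf) (hUcl : U.closed) :
    SessionCF.Subtype .recv U T ↔
      SessionCF.Sat T (SessionCF.charF U .recv) := by
  constructor
  · intro hsub
    have h := SessionCF.forward U 0 SessionCF.SType.var SessionCF.Formula.var hUwf hUcl
      (fun n hn => absurd hn (by omega)) (fun n _ => by simp)
      (fun n hn => absurd hn (by omega)) (fun n hn => absurd hn (by omega))
      T hTcl hTwf (by rwa [SessionCF.SType.subst_var])
    rwa [SessionCF.Formula.subst_var] at h
  · intro hsat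
    exact ⟨SessionCF.SatRel, SessionCF.satRel_closure, hUcl, hUwf, hTcl, hTwf, hsat⟩
end

section
/- For every closed session type T and every closed μ-calculus formula φ: T ⊨ φ if and only if T̄ ⊨ φ̄, where T̄ is the dual session type and φ̄ is the dual formula. -/
namespace SessionCF

lemma Pol.dual_dual (p : Pol) : p.dual.dual = p := by cases p <;> rfl

lemma SType.dual_rename {A : Type} (T : SType A) (f : ℕ → ℕ) :
    (T.rename f).dual = T.dual.rename f := by
  induction T generalizing f with
  | end_ => rfl
  | choice p d br ih => simp [SType.rename, SType.dual, ih]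
  | mu T ih => simp [SType.rename, SType.dual, ih]
  | var n => rfl

lemma SType.dual_subst {A : Type} (T : SType A) (σ : ℕ → SType A) :
    (T.subst σ).dual = T.dual.subst (fun n => (σ n).dual) := by
  induction T generalizing σ with
  | end_ => rfl
  | choice p d br ih => simp [SType.subst, SType.dual, ih]
  | mu T ih =>
      simp only [SType.subst, SType.dual, ih]
      have heq : (fun n => (SType.liftS σ n).dual) = SType.liftS (fun n => (σ n).dual) := by
        funext n
        cases n <;> simp [SType.liftS, SType.dual, SType.dual_rename]
      rw [heq]
  | var n => rfl

lemma SType.dual_unfold {A : Type} (T : SType A) :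
    T.unfold.dual = T.dual.unfold := by
  simp only [SType.unfold, SType.dual_subst]
  congr 1
  funext n
  cases n <;> rfl

lemma SType.dual_dual {A : Type} (T : SType A) : T.dual.dual = T := by
  induction T with
  | end_ => rfl
  | choice p d br ih => simp [SType.dual, ih, Pol.dual_dual]
  | mu T ih => simp [SType.dual, ih]
  | var n => rfl

lemma Step.dual {A : Type} {T T' : SType A} {α : Act A}
    (h : Step T α T') : Step T.dual (α.1.dual, α.2) T'.dual := by
  induction h with
  | choice h => exact Step.choice h
  | unf h ih =>
      exact Step.unf (by rwa [← SType.dual_unfold])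

lemma Formula.dual_rename {A : Type} (φ : Formula A) (f : ℕ → ℕ) :
    (φ.rename f).dual = φ.dual.rename f := by
  induction φ generalizing f with
  | box α φ ih => obtain ⟨p, a⟩ := α; simp [Formula.rename, Formula.dual, ih]
  | dia α φ ih => obtain ⟨p, a⟩ := α; simp [Formula.rename, Formula.dual, ih]
  | _ => simp [Formula.rename, Formula.dual, *]

lemma Formula.dual_subst {A : Type} (φ : Formula A) (τ : ℕ → Formula A) :
    (φ.subst τ).dual = φ.dual.subst (fun n => (τ n).dual) := by
  induction φ generalizing τ with
  | box α φ ih => obtain ⟨p, a⟩ := α; simp [Formula.subst, Formula.dual, ih]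
  | dia α φ ih => obtain ⟨p, a⟩ := α; simp [Formula.subst, Formula.dual, ih]
  | nu φ ih =>
      simp only [Formula.subst, Formula.dual, ih]
      have heq : (fun n => (Formula.liftF τ n).dual) = Formula.liftF (fun n => (τ n).dual) := by
        funext n
        cases n <;> simp [Formula.liftF, Formula.dual, Formula.dual_rename]
      rw [heq]
  | _ => simp [Formula.subst, Formula.dual, *]

lemma Formula.dual_nuApprox {A : Type} (φ : Formula A) (n : ℕ) :
    (φ.nuApprox n).dual = φ.dual.nuApprox n := by
  induction n with
  | zero => rfl
  | succ n ih =>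
      simp only [Formula.nuApprox, Formula.inst, Formula.dual_subst, ih]
      congr 1
      funext m
      cases m <;> simp [Formula.consF, Formula.dual, ih]

lemma Formula.dual_dual {A : Type} (φ : Formula A) : φ.dual.dual = φ := by
  induction φ with
  | box α φ ih => obtain ⟨p, a⟩ := α; simp [Formula.dual, ih, Pol.dual_dual]
  | dia α φ ih => obtain ⟨p, a⟩ := α; simp [Formula.dual, ih, Pol.dual_dual]
  | _ => simp [Formula.dual, *]

lemma Sat.dual {A : Type} {T : SType A} {φ : Formula A}
    (h : Sat T φ) : Sat T.dual φ.dual := by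
  induction h with
  | tt => exact Sat.tt
  | and _ _ ih1 ih2 => exact Sat.and ih1 ih2
  | orl _ ih => exact Sat.orl ih
  | orr _ ih => exact Sat.orr ih
  | @box T α φ h ih =>
      obtain ⟨p, a⟩ := α
      refine Sat.box (fun T' hstep => ?_)
      have h1 := hstep.dual
      rw [SType.dual_dual] at h1
      simp only [Pol.dual_dual] at h1
      have h2 := ih T'.dual h1
      rwa [SType.dual_dual] at h2
  | @dia T T' α φ hstep hsat ih =>
      obtain ⟨p, a⟩ := α
      exact Sat.dia hstep.dual ih
  | nu h ih =>
      refine Sat.nu (fun n => ?_)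
      have := ih n
      rwa [Formula.dual_nuApprox] at this

end SessionCF


/-- For every closed session type `T` and every closed formula
`φ`: `T ⊨ φ` iff `T̄ ⊨ φ̄`. -/
theorem sat_iff_dual_sat_dual {A : Type}
    (T : SessionCF.SType A) (φ : SessionCF.Formula A)
    (hTwf : T.wf) (hTcl : T.closed) (hφwf : φ.wf) (hφcl : φ.closed) :
    SessionCF.Sat T φ ↔ SessionCF.Sat T.dual φ.dual := by
  constructor
  · exact SessionCF.Sat.dual
  · intro h
    have := SessionCF.Sat.dual h
    rwa [SessionCF.SType.dual_dual, SessionCF.Formula.dual_dual] at this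
end

section
/- For all closed session types T and U: T ≼ U (i.e., T ≤_⊕ U) if and only if the language of the product automaton 𝒜(T) × 𝒜(U) of their term automata is empty (i.e., no accepting state of the product automaton is reachable from its initial state). -/
/-!
A simulation `R` witnessing `T ≼ U` relates every pair reachable in the product automaton
`𝒜(T) × 𝒜(U)`, and the subtyping rules force the constructors of related pairs to be
`⊑`-ordered, so no accepting state is reachable. Conversely, on closed types the pairs from
which no accepting state is reachable form a simulation: `⊑` between the constructors is
exactly the side condition of the rules for `end` and choices, and emptiness passes to
successors. The only subtlety is that the rules may unfold `rec` on either side in any order,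
so a related pair is first pushed down to the pair of its unfolded heads, by induction on
both unfolding depths.
-/

namespace SessionCF

variable {A : Type}

namespace SType

theorem closedUnder_rename (T : SType A) {k m : ℕ} {f : ℕ → ℕ} (hT : T.closedUnder k)
    (hf : ∀ n < k, f n < m) : (T.rename f).closedUnder m := by
  induction T generalizing k m f with
  | end_ => trivial
  | choice p d br ih => exact fun a ha => ih a (hT a ha) hf
  | mu T ih =>
    refine ih hT fun n hn => ?_
    cases n with
    | zero => exact Nat.succ_pos m
    | succ n => exact Nat.succ_lt_succ (hf n (Nat.lt_of_succ_lt_succ hn))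
  | var n => exact hf n hT

theorem closedUnder_subst (T : SType A) {k m : ℕ} {σ : ℕ → SType A} (hT : T.closedUnder k)
    (hσ : ∀ n < k, (σ n).closedUnder m) : (T.subst σ).closedUnder m := by
  induction T generalizing k m σ with
  | end_ => trivial
  | choice p d br ih => exact fun a ha => ih a (hT a ha) hσ
  | mu T ih =>
    refine ih hT fun n hn => ?_
    cases n with
    | zero => exact Nat.succ_pos m
    | succ n =>
      exact closedUnder_rename _ (hσ n (Nat.lt_of_succ_lt_succ hn)) fun _ => Nat.succ_lt_succ
  | var n => exact hσ n hT

theorem closed_unfold {T : SType A} (h : (SType.mu T).closed) : T.unfold.closed :=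
  closedUnder_subst T h fun n hn => by
    obtain rfl : n = 0 := Nat.lt_one_iff.mp hn
    exact h

def IsMu : SType A → Prop
  | .mu _ => True
  | _ => False

end SType

inductive IsUnfolding (H : SType A) : SType A → Prop
  | refl : IsUnfolding H H
  | mu {T : SType A} : IsUnfolding H T.unfold → IsUnfolding H (.mu T)

theorem HasCtor.exists_isUnfolding {T : SType A} {c : Ctor A} (h : HasCtor T c) :
    ∃ H, IsUnfolding H T ∧ ¬ H.IsMu ∧ HasCtor H c := by
  induction h with
  | end_ => exact ⟨_, .refl, id, .end_⟩
  | choice => exact ⟨_, .refl, id, .choice⟩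
  | unf _ ih =>
    obtain ⟨H, hH, hmu, hc⟩ := ih
    exact ⟨H, .mu hH, hmu, hc⟩

theorem Step.exists_isUnfolding {T T' : SType A} {α : Act A} (h : Step T α T') :
    ∃ H, IsUnfolding H T ∧ ¬ H.IsMu ∧ Step H α T' := by
  induction h with
  | choice ha => exact ⟨_, .refl, id, .choice ha⟩
  | unf _ ih =>
    obtain ⟨H, hH, hmu, hs⟩ := ih
    exact ⟨H, .mu hH, hmu, hs⟩

section SubStep

variable {s : Pol} {R : SType A → SType A → Prop}

theorem SubStep.mu_left {T U : SType A} (h : SubStep s R (.mu T) U) :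
    R T.unfold U ∨ ∃ U₀, U = .mu U₀ ∧ R (.mu T) U₀.unfold := by
  rcases h with ⟨⟨⟩, -⟩ | ⟨_, _, _, _, ⟨⟩, -⟩ | ⟨_, _, _, _, ⟨⟩, -⟩ | ⟨_, ⟨⟩, h⟩ | h
  exacts [.inl h, .inr h]

theorem SubStep.mu_right {T U : SType A} (h : SubStep s R T (.mu U)) :
    R T U.unfold ∨ ∃ T₀, T = .mu T₀ ∧ R T₀.unfold (.mu U) := by
  rcases h with ⟨-, ⟨⟩⟩ | ⟨_, _, _, _, -, ⟨⟩, -⟩ | ⟨_, _, _, _, -, ⟨⟩, -⟩ | h | ⟨_, ⟨⟩, h⟩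
  exacts [.inr h, .inl h]

theorem SubStep.choice {p : Pol} {d e : Finset A} {br br' : A → SType A} {a : A}
    (h : SubStep s R (.choice p d br) (.choice p e br')) (hd : a ∈ d) (he : a ∈ e) :
    R (br a) (br' a) := by
  rcases h with ⟨⟨⟩, -⟩ | ⟨_, _, _, _, ⟨⟩, ⟨⟩, -, h⟩ | ⟨_, _, _, _, ⟨⟩, ⟨⟩, -, h⟩ | ⟨_, ⟨⟩, -⟩ |
    ⟨_, ⟨⟩, -⟩
  exacts [h a hd, h a he]

theorem SubStep.ctorLe {T U : SType A} {c₁ c₂ : Ctor A} (h : SubStep .send R T U)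
    (hT : HasCtor T c₁) (hU : HasCtor U c₂) (hTmu : ¬ T.IsMu) (hUmu : ¬ U.IsMu) :
    CtorLe c₁ c₂ := by
  rcases h with ⟨rfl, rfl⟩ | ⟨_, _, _, _, rfl, rfl, hsub, -⟩ | ⟨_, _, _, _, rfl, rfl, hsub, -⟩ |
    ⟨_, rfl, -⟩ | ⟨_, rfl, -⟩
  · cases hT; cases hU; trivial
  · cases hT; cases hU; exact hsub
  · cases hT; cases hU; exact hsub
  · exact absurd trivial hTmu
  · exact absurd trivial hUmu

end SubStep

def SubSimulation (s : Pol) (R : SType A → SType A → Prop) : Prop :=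
  ∀ T U, R T U → SubStep s R T U

namespace SubSimulation

variable {s : Pol} {R : SType A → SType A → Prop}

theorem rel_of_isUnfolding (hR : SubSimulation s R) {T U H₁ H₂ : SType A} (hT : IsUnfolding H₁ T)
    (hU : IsUnfolding H₂ U) (h₁ : ¬ H₁.IsMu) (h₂ : ¬ H₂.IsMu) (hTU : R T U) : R H₁ H₂ := by
  induction hT generalizing U with
  | refl =>
    induction hU with
    | refl => exact hTU
    | mu _ ih =>
      rcases (hR _ _ hTU).mu_right with h | ⟨_, rfl, -⟩
      exacts [ih h, absurd trivial h₁]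
  | mu _ ihT =>
    induction hU with
    | refl =>
      rcases (hR _ _ hTU).mu_left with h | ⟨_, rfl, -⟩
      exacts [ihT .refl h, absurd trivial h₂]
    | mu hU ihU =>
      rcases (hR _ _ hTU).mu_left with h | ⟨_, ⟨⟩, h⟩
      exacts [ihT (.mu hU) h, ihU h]

theorem step (hR : SubSimulation s R) {T U T' U' : SType A} {α : Act A} (hTU : R T U)
    (hT : Step T α T') (hU : Step U α U') : R T' U' := by
  obtain ⟨H₁, hT, h₁, hs₁⟩ := hT.exists_isUnfolding
  obtain ⟨H₂, hU, h₂, hs₂⟩ := hU.exists_isUnfolding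
  have hH := hR.rel_of_isUnfolding hT hU h₁ h₂ hTU
  cases hs₁ with
  | unf => exact absurd trivial h₁
  | choice hd =>
    cases hs₂ with
    | unf => exact absurd trivial h₂
    | choice he => exact (hR _ _ hH).choice hd he

theorem ctorLe (hR : SubSimulation .send R) {T U : SType A} {c₁ c₂ : Ctor A} (hTU : R T U)
    (hT : HasCtor T c₁) (hU : HasCtor U c₂) : CtorLe c₁ c₂ := by
  obtain ⟨H₁, hT, h₁, hc₁⟩ := hT.exists_isUnfolding
  obtain ⟨H₂, hU, h₂, hc₂⟩ := hU.exists_isUnfolding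
  exact (hR _ _ (hR.rel_of_isUnfolding hT hU h₁ h₂ hTU)).ctorLe hc₁ hc₂ h₁ h₂

end SubSimulation

def ProductLanguageEmpty (T U : SType A) : Prop :=
  ∀ S' : SType A × SType A, Relation.ReflTransGen ProdStep (T, U) S' →
    ∀ c₁ c₂ : Ctor A, HasCtor S'.1 c₁ → HasCtor S'.2 c₂ → CtorLe c₁ c₂

theorem Subtype.productLanguageEmpty {T U : SType A} (h : Subtype .send T U) :
    ProductLanguageEmpty T U := by
  obtain ⟨R, hR, hTU⟩ := h
  intro S' hS'
  have hS'R : R S'.1 S'.2 := by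
    induction hS' with
    | refl => exact hTU
    | tail _ hstep ih =>
      obtain ⟨α, hs₁, hs₂⟩ := hstep
      exact SubSimulation.step hR ih hs₁ hs₂
  exact fun c₁ c₂ => SubSimulation.ctorLe hR hS'R

namespace ProductLanguageEmpty

variable {T U : SType A}

theorem ctorLe (h : ProductLanguageEmpty T U) {c₁ c₂ : Ctor A} (hT : HasCtor T c₁)
    (hU : HasCtor U c₂) : CtorLe c₁ c₂ :=
  h _ .refl _ _ hT hU

theorem step (h : ProductLanguageEmpty T U) {T' U' : SType A} {α : Act A} (hT : Step T α T')
    (hU : Step U α U') : ProductLanguageEmpty T' U' :=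
  fun S' hS' => h S' (.head ⟨α, hT, hU⟩ hS')

theorem mono (h : ProductLanguageEmpty T U) {T' U' : SType A}
    (hstepT : ∀ α V, Step T' α V → Step T α V) (hctorT : ∀ c, HasCtor T' c → HasCtor T c)
    (hstepU : ∀ α V, Step U' α V → Step U α V) (hctorU : ∀ c, HasCtor U' c → HasCtor U c) :
    ProductLanguageEmpty T' U' := by
  intro S' hS'
  rcases hS'.cases_head with rfl | ⟨S, ⟨α, hs₁, hs₂⟩, hS⟩
  · exact fun c₁ c₂ hc₁ hc₂ => h.ctorLe (hctorT c₁ hc₁) (hctorU c₂ hc₂)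
  · exact (h.step (hstepT α _ hs₁) (hstepU α _ hs₂)) S' hS

theorem unfold_left {T₀ : SType A} (h : ProductLanguageEmpty (.mu T₀) U) :
    ProductLanguageEmpty T₀.unfold U :=
  h.mono (fun _ _ => .unf) (fun _ => .unf) (fun _ _ => id) (fun _ => id)

theorem unfold_right {U₀ : SType A} (h : ProductLanguageEmpty T (.mu U₀)) :
    ProductLanguageEmpty T U₀.unfold :=
  h.mono (fun _ _ => id) (fun _ => id) (fun _ _ => .unf) (fun _ => .unf)

theorem subStep (hT : T.closed) (hU : U.closed) (h : ProductLanguageEmpty T U) :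
    SubStep .send (fun V W => V.closed ∧ W.closed ∧ ProductLanguageEmpty V W) T U := by
  match T, U, hT, hU with
  | .var _, _, hT, _ => exact absurd hT (Nat.not_lt_zero _)
  | _, .var _, _, hU => exact absurd hU (Nat.not_lt_zero _)
  | .mu T₀, _, hT, hU =>
    exact .inr <| .inr <| .inr <| .inl ⟨T₀, rfl, SType.closed_unfold hT, hU, h.unfold_left⟩
  | _, .mu U₀, hT, hU =>
    exact .inr <| .inr <| .inr <| .inr ⟨U₀, rfl, hT, SType.closed_unfold hU, h.unfold_right⟩
  | .end_, .end_, _, _ => exact .inl ⟨rfl, rfl⟩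
  | .end_, .choice p d br, _, _ => exact (h.ctorLe .end_ .choice).elim
  | .choice p d br, .end_, _, _ => cases p <;> exact (h.ctorLe .choice .end_).elim
  | .choice p d br, .choice q e br', hT, hU =>
    have hle := h.ctorLe .choice .choice
    cases p <;> cases q
    · exact .inr <| .inl ⟨d, br, e, br', rfl, rfl, hle, fun a ha =>
        ⟨hT a ha, hU a (hle ha), h.step (.choice ha) (.choice (hle ha))⟩⟩
    · exact hle.elim
    · exact hle.elim
    · exact .inr <| .inr <| .inl ⟨d, br, e, br', rfl, rfl, hle, fun a ha =>
        ⟨hT a (hle ha), hU a ha, h.step (.choice (hle ha)) (.choice ha)⟩⟩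

theorem subtype (hT : T.closed) (hU : U.closed) (h : ProductLanguageEmpty T U) :
    Subtype .send T U :=
  ⟨fun V W => V.closed ∧ W.closed ∧ ProductLanguageEmpty V W,
    fun _ _ ⟨hV, hW, hVW⟩ => hVW.subStep hV hW, hT, hU, h⟩

end ProductLanguageEmpty

end SessionCF

theorem sub_iff_product_language_empty_general {A : Type}
    (T U : SessionCF.SType A)
    (hTcl : T.closed) (hUcl : U.closed) :
    SessionCF.Subtype .send T U ↔
      ∀ S' : SessionCF.SType A × SessionCF.SType A,
        Relation.ReflTransGen SessionCF.ProdStep (T, U) S' →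
        ∀ c₁ c₂ : SessionCF.Ctor A,
          SessionCF.HasCtor S'.1 c₁ → SessionCF.HasCtor S'.2 c₂ →
          SessionCF.CtorLe c₁ c₂ :=
  ⟨fun h => h.productLanguageEmpty, SessionCF.ProductLanguageEmpty.subtype hTcl hUcl⟩

/-- For all closed session types `T`, `U`: `T ≼ U` iff the
language of the product automaton `𝒜(T) × 𝒜(U)` is empty, i.e., no accepting
state (a pair of states whose labels are not related by `⊑`) is reachable
from the initial state `(T, U)`. -/
theorem sub_iff_product_language_empty {A : Type}
    (T U : SessionCF.SType A)
    (hTwf : T.wf) (hTcl : T.closed) (hUwf : U.wf) (hUcl : U.closed) :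
    SessionCF.Subtype .send T U ↔
      ∀ S' : SessionCF.SType A × SessionCF.SType A,
        Relation.ReflTransGen SessionCF.ProdStep (T, U) S' →
        ∀ c₁ c₂ : SessionCF.Ctor A,
          SessionCF.HasCtor S'.1 c₁ → SessionCF.HasCtor S'.2 c₂ →
          SessionCF.CtorLe c₁ c₂ :=
  sub_iff_product_language_empty_general T U hTcl hUcl
end
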